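/- arXiv:2309.06401 — 4 statements merged into one kernel-verified Lean document; each statement's English description precedes it below -/
import Mathlib

section
/- Let Δ = diag(a₁,…,a_n) be a block-scalar diagonal matrix over F_q of type α (a composition of n), and let C ⊆ {1,…,n} with |C| = m. Then the number of m-dimensional Δ-invariant subspaces of F_q^n with pivot set C equals q^{inv_α(b(C))}, where inv_α(b(C)) is the number of pairs (c, c') with c ∈ C, c' ∉ C, c < c', and c, c' lying in the same block of the canonical set partition A_α. -/
open Finset
open scoped Classical

noncomputable def projDim (F : Type*) [Field F] {n : ℕ} (W : Submodule F (Fin n → F))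
    {j : ℕ} (h : j ≤ n) : ℕ :=
  Module.finrank F (W.map (LinearMap.funLeft F F (Fin.castLE h)))

noncomputable def pivotSet (F : Type*) [Field F] {n : ℕ} (W : Submodule F (Fin n → F)) :
    Finset (Fin n) :=
  Finset.univ.filter fun c : Fin n =>
    projDim F W (Nat.le_of_lt c.isLt) < projDim F W (c.isLt : c.val + 1 ≤ n)

section Aux
variable {F : Type*} [Field F] {n : ℕ}

lemma proj_comp {j j' : ℕ} (hjj' : j ≤ j') (hj' : j' ≤ n) (W : Submodule F (Fin n → F)) :
    (W.map (LinearMap.funLeft F F (Fin.castLE hj'))).map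
        (LinearMap.funLeft F F (Fin.castLE hjj'))
      = W.map (LinearMap.funLeft F F (Fin.castLE (hjj'.trans hj'))) := by
  rw [← Submodule.map_comp, ← LinearMap.funLeft_comp]
  rfl

/-- If `w ∈ W` vanishes below `j` but not at `j`, then `j` is a pivot of `W`. -/
lemma pivot_of_min_support (W : Submodule F (Fin n → F)) {w : Fin n → F} (hw : w ∈ W)
    (j : Fin n) (hlt : ∀ i : Fin n, i < j → w i = 0) (hj : w j ≠ 0) :
    j ∈ pivotSet F W := by
  simp only [pivotSet, mem_filter, mem_univ, true_and]
  set V := W.map (LinearMap.funLeft F F (Fin.castLE (j.isLt : j.val + 1 ≤ n)))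
  have hVfd : FiniteDimensional F V := inferInstance
  set τ : (Fin (j.val + 1) → F) →ₗ[F] (Fin j.val → F) :=
    LinearMap.funLeft F F (Fin.castLE (Nat.le_succ j.val))
  have hmap : V.map τ = W.map (LinearMap.funLeft F F (Fin.castLE (Nat.le_of_lt j.isLt))) :=
    proj_comp _ _ W
  have hrn := LinearMap.finrank_range_add_finrank_ker (τ.domRestrict V)
  rw [LinearMap.range_domRestrict] at hrn
  -- the kernel is nontrivial
  have hx : (LinearMap.funLeft F F (Fin.castLE (j.isLt : j.val + 1 ≤ n))) w ∈ V :=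
    Submodule.mem_map_of_mem hw
  have hker : (⟨_, hx⟩ : V) ∈ LinearMap.ker (τ.domRestrict V) := by
    simp only [LinearMap.mem_ker, LinearMap.domRestrict_apply]
    ext i
    show w (Fin.castLE _ (Fin.castLE _ i)) = 0
    exact hlt _ (by simpa [Fin.lt_def] using i.isLt)
  have hkne : (⟨_, hx⟩ : V) ≠ 0 := by
    intro h0
    apply hj
    have := congrFun (congrArg Subtype.val h0) (Fin.last j.val)
    simpa [LinearMap.funLeft_apply, Fin.castLE] using this
  have hkpos : 0 < Module.finrank F (LinearMap.ker (τ.domRestrict V)) := by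
    refine (Module.finrank_pos_iff (R := F) (M := LinearMap.ker (τ.domRestrict V))).mpr ?_
    exact ⟨⟨⟨_, hker⟩, 0, by simpa using hkne⟩⟩
  have hlt2 : Module.finrank F (V.map τ) < Module.finrank F V := by
    rw [← hrn]
    exact Nat.lt_add_of_pos_right hkpos
  rw [hmap] at hlt2
  exact hlt2

end Aux

section RREF
variable {F : Type*} [Field F] {n : ℕ} {C : Finset (Fin n)} {r : ↥C → (Fin n → F)}

lemma rref_coords (h1 : ∀ c : ↥C, r c (c : Fin n) = 1)
    (h2 : ∀ c c' : ↥C, c ≠ c' → r c (c' : Fin n) = 0)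
    {w : Fin n → F} (hw : w ∈ Submodule.span F (Set.range r)) :
    w = ∑ c : ↥C, w (c : Fin n) • r c := by
  obtain ⟨g, hg⟩ := (Submodule.mem_span_range_iff_exists_fun F).mp hw
  have hgc : ∀ c : ↥C, w (c : Fin n) = g c := by
    intro c
    rw [← hg]
    simp only [Finset.sum_apply, Pi.smul_apply, smul_eq_mul]
    rw [Finset.sum_eq_single c (fun b _ hb => by rw [h2 b c hb, mul_zero])
      (fun hc => absurd (Finset.mem_univ c) hc), h1 c, mul_one]
  calc w = ∑ c : ↥C, g c • r c := hg.symm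
    _ = ∑ c : ↥C, w (c : Fin n) • r c := by
        exact Finset.sum_congr rfl fun c _ => by rw [hgc c]

lemma rref_li (h1 : ∀ c : ↥C, r c (c : Fin n) = 1)
    (h2 : ∀ c c' : ↥C, c ≠ c' → r c (c' : Fin n) = 0) :
    LinearIndependent F r := by
  rw [Fintype.linearIndependent_iff]
  intro g hg c
  have h := congrFun hg (c : Fin n)
  simp only [Finset.sum_apply, Pi.smul_apply, smul_eq_mul, Pi.zero_apply] at h
  rwa [Finset.sum_eq_single c (fun b _ hb => by rw [h2 b c hb, mul_zero])
    (fun hc => absurd (Finset.mem_univ c) hc), h1 c, mul_one] at h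

set_option maxHeartbeats 1000000 in
lemma rref_finrank (h1 : ∀ c : ↥C, r c (c : Fin n) = 1)
    (h2 : ∀ c c' : ↥C, c ≠ c' → r c (c' : Fin n) = 0) :
    Module.finrank F (Submodule.span F (Set.range r)) = C.card := by
  have hli := rref_li h1 h2
  rw [finrank_span_eq_card hli, Fintype.card_coe]

set_option maxHeartbeats 1000000 in
lemma rref_projDim (h1 : ∀ c : ↥C, r c (c : Fin n) = 1)
    (h2 : ∀ c c' : ↥C, c ≠ c' → r c (c' : Fin n) = 0)
    (h3 : ∀ (c : ↥C) (j : Fin n), j < (c : Fin n) → r c j = 0)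
    {j : ℕ} (hj : j ≤ n) :
    projDim F (Submodule.span F (Set.range r)) hj
      = (C.filter fun c => c.val < j).card := by
  set π := LinearMap.funLeft F F (Fin.castLE hj) with hπ
  set C' := C.filter (fun c => c.val < j) with hC'
  set r' : ↥C' → (Fin j → F) :=
    fun c => π (r ⟨c.1, (Finset.mem_filter.mp c.2).1⟩) with hr'
  have hmap : (Submodule.span F (Set.range r)).map π = Submodule.span F (Set.range r') := by
    rw [Submodule.map_span, ← Set.range_comp]
    apply le_antisymm
    · rw [Submodule.span_le]
      rintro _ ⟨c, rfl⟩
      by_cases hc : (c : Fin n).val < j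
      · exact Submodule.subset_span
          ⟨⟨c.1, Finset.mem_filter.mpr ⟨c.2, hc⟩⟩, rfl⟩
      · have hz : π (r c) = 0 := by
          funext i
          rw [hπ, LinearMap.funLeft_apply]
          apply h3
          rw [Fin.lt_def]
          have := i.isLt
          simp only [Fin.coe_castLE]
          omega
        show π (r c) ∈ _
        rw [hz]
        exact (Submodule.span F _).zero_mem
    · rw [Submodule.span_le]
      rintro _ ⟨c, rfl⟩
      exact Submodule.subset_span ⟨⟨c.1, (Finset.mem_filter.mp c.2).1⟩, rfl⟩
  have hli : LinearIndependent F r' := by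
    rw [Fintype.linearIndependent_iff]
    intro g hg c
    have hcj : (c : Fin n).val < j := (Finset.mem_filter.mp c.2).2
    have h := congrFun hg (⟨(c : Fin n).val, hcj⟩ : Fin j)
    simp only [Finset.sum_apply, Pi.smul_apply, smul_eq_mul, Pi.zero_apply] at h
    have key : ∀ b : ↥C', r' b (⟨(c : Fin n).val, hcj⟩ : Fin j)
        = r ⟨b.1, (Finset.mem_filter.mp b.2).1⟩ (c : Fin n) := by
      intro b
      simp only [hr', hπ, LinearMap.funLeft_apply]
      exact congrArg _ (Fin.ext rfl)
    rw [Finset.sum_eq_single c] at h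
    · rw [key c] at h
      rw [h1 ⟨c.1, (Finset.mem_filter.mp c.2).1⟩] at h
      rwa [mul_one] at h
    · intro b _ hb
      rw [key b, h2 _ ⟨c.1, (Finset.mem_filter.mp c.2).1⟩ (by
        intro he
        exact hb (Subtype.ext (Subtype.mk_eq_mk.mp he))), mul_zero]
    · intro hc; exact absurd (Finset.mem_univ c) hc
  rw [projDim, hmap, finrank_span_eq_card hli, Fintype.card_coe]

lemma rref_pivotSet (h1 : ∀ c : ↥C, r c (c : Fin n) = 1)
    (h2 : ∀ c c' : ↥C, c ≠ c' → r c (c' : Fin n) = 0)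
    (h3 : ∀ (c : ↥C) (j : Fin n), j < (c : Fin n) → r c j = 0) :
    pivotSet F (Submodule.span F (Set.range r)) = C := by
  ext c
  simp only [pivotSet, Finset.mem_filter, Finset.mem_univ, true_and]
  rw [rref_projDim h1 h2 h3, rref_projDim h1 h2 h3]
  have hsplit : C.filter (fun x => x.val < c.val + 1)
      = C.filter (fun x => x.val < c.val) ∪ C.filter (fun x => x = c) := by
    ext x
    simp only [Finset.mem_filter, Finset.mem_union]
    constructor
    · rintro ⟨hx, hlt⟩
      rcases Nat.lt_or_ge x.val c.val with h | h
      · exact Or.inl ⟨hx, h⟩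
      · exact Or.inr ⟨hx, Fin.ext (by omega)⟩
    · rintro (⟨hx, hlt⟩ | ⟨hx, rfl⟩)
      · exact ⟨hx, by omega⟩
      · exact ⟨hx, by omega⟩
  have hdisj : Disjoint (C.filter (fun x => x.val < c.val)) (C.filter (fun x => x = c)) := by
    rw [Finset.disjoint_left]
    intro x hx1 hx2
    rw [Finset.mem_filter] at hx1 hx2
    rw [hx2.2] at hx1
    omega
  rw [hsplit, Finset.card_union_of_disjoint hdisj, Finset.filter_eq']
  by_cases hc : c ∈ C <;> simp [hc]

end RREF

section Extract
variable {F : Type*} [Field F] {n : ℕ}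

lemma vanish_on_pivots {W : Submodule F (Fin n → F)} {C : Finset (Fin n)}
    (hpiv : pivotSet F W = C) {w : Fin n → F} (hw : w ∈ W)
    (h0 : ∀ c ∈ C, w c = 0) : w = 0 := by
  by_contra hne
  have hsupp : (Finset.univ.filter fun i : Fin n => w i ≠ 0).Nonempty := by
    rcases Function.ne_iff.mp hne with ⟨i, hi⟩
    exact ⟨i, by simp only [Finset.mem_filter, Finset.mem_univ, true_and]; exact hi⟩
  set j := Finset.min' _ hsupp with hjdef
  have hj : w j ≠ 0 := (Finset.mem_filter.mp (Finset.min'_mem _ hsupp)).2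
  have hlt : ∀ i : Fin n, i < j → w i = 0 := by
    intro i hi
    by_contra hwi
    exact absurd (Finset.min'_le _ i (by
      simp only [Finset.mem_filter, Finset.mem_univ, true_and]; exact hwi)) (not_le.mpr hi)
  have hmem := pivot_of_min_support W hw j hlt hj
  rw [hpiv] at hmem
  exact hj (h0 j hmem)

lemma exists_rref_basis {W : Submodule F (Fin n → F)} {C : Finset (Fin n)}
    (hrank : Module.finrank F W = C.card) (hpiv : pivotSet F W = C) :
    ∃ r : ↥C → (Fin n → F),
      (∀ c, r c ∈ W) ∧
      (∀ c : ↥C, r c (c : Fin n) = 1) ∧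
      (∀ c c' : ↥C, c ≠ c' → r c (c' : Fin n) = 0) ∧
      (∀ (c : ↥C) (j : Fin n), j < (c : Fin n) → r c j = 0) ∧
      Submodule.span F (Set.range r) = W := by
  set ρ : W →ₗ[F] (↥C → F) :=
    (LinearMap.funLeft F F (fun c : ↥C => (c : Fin n))).comp W.subtype with hρ
  have hρapp : ∀ (x : W) (c : ↥C), ρ x c = (x : Fin n → F) (c : Fin n) := fun x c => rfl
  have hinj : Function.Injective ρ := by
    rw [← LinearMap.ker_eq_bot]
    rw [Submodule.eq_bot_iff]
    intro x hx
    rw [LinearMap.mem_ker] at hx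
    have hx0 : (x : Fin n → F) = 0 := by
      refine vanish_on_pivots hpiv x.2 ?_
      intro c hc
      have := congrFun hx (⟨c, hc⟩ : ↥C)
      exact this
    exact Subtype.ext hx0
  have hsurj : Function.Surjective ρ := by
    have hdim : Module.finrank F W = Module.finrank F (↥C → F) := by
      rw [hrank, Module.finrank_fintype_fun_eq_card, Fintype.card_coe]
    exact (LinearMap.injective_iff_surjective_of_finrank_eq_finrank hdim).mp hinj
  set s : ↥C → W := fun c => Classical.choose (hsurj (Pi.single c 1)) with hs
  have hsspec : ∀ c : ↥C, ρ (s c) = Pi.single c 1 :=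
    fun c => Classical.choose_spec (hsurj (Pi.single c 1))
  set r : ↥C → (Fin n → F) := fun c => ((s c : W) : Fin n → F) with hr
  have hmem : ∀ c, r c ∈ W := fun c => (s c).2
  have h1 : ∀ c : ↥C, r c (c : Fin n) = 1 :=
    fun c => (congrFun (hsspec c) c).trans (Pi.single_eq_same c 1)
  have h2 : ∀ c c' : ↥C, c ≠ c' → r c (c' : Fin n) = 0 :=
    fun c c' hne => (congrFun (hsspec c) c').trans (Pi.single_eq_of_ne (Ne.symm hne) 1)
  have h3 : ∀ (c : ↥C) (j : Fin n), j < (c : Fin n) → r c j = 0 := by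
    intro c j hjc
    by_contra hbad
    have hsupp : (Finset.univ.filter fun i : Fin n => i < (c : Fin n) ∧ r c i ≠ 0).Nonempty :=
      ⟨j, by simp only [Finset.mem_filter, Finset.mem_univ, true_and]; exact ⟨hjc, hbad⟩⟩
    set j0 := Finset.min' _ hsupp with hj0def
    have hj0mem := Finset.mem_filter.mp (Finset.min'_mem _ hsupp)
    have hj0c : j0 < (c : Fin n) := hj0mem.2.1
    have hj0ne : r c j0 ≠ 0 := hj0mem.2.2
    have hltz : ∀ i : Fin n, i < j0 → r c i = 0 := by
      intro i hi
      by_contra hwi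
      exact absurd (Finset.min'_le _ i (by
        simp only [Finset.mem_filter, Finset.mem_univ, true_and]
        exact ⟨lt_trans hi hj0c, hwi⟩)) (not_le.mpr hi)
    have hpmem := pivot_of_min_support W (hmem c) j0 hltz hj0ne
    rw [hpiv] at hpmem
    have : r c j0 = 0 := by
      have hne : c ≠ (⟨j0, hpmem⟩ : ↥C) := by
        intro he
        rw [he] at hj0c
        exact lt_irrefl j0 hj0c
      exact h2 c ⟨j0, hpmem⟩ hne
    exact hj0ne this
  refine ⟨r, hmem, h1, h2, h3, ?_⟩
  have hle : Submodule.span F (Set.range r) ≤ W := by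
    rw [Submodule.span_le]
    rintro _ ⟨c, rfl⟩
    exact hmem c
  have hfr := rref_finrank h1 h2
  exact Submodule.eq_of_le_of_finrank_le hle (by rw [hrank, hfr])

end Extract

/-- Let `Δ = diag(a₁,…,a_n)` be a block-scalar diagonal matrix over `F_q` (all occurrences of
each diagonal entry are contiguous, so two indices lie in the same block of the canonical set
partition of the type of `Δ` iff their diagonal entries agree).  The number of `m`-dimensional
`Δ`-invariant subspaces of `F_q^n` with pivot set `C` equals `q^{inv_α(b(C))}`, where
`inv_α(b(C))` is the number of pairs `(c, c')` with `c ∈ C`, `c' ∉ C`, `c < c'`, and `c, c'`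
in the same block. -/
theorem count_invariant_subspaces_with_pivots (F : Type*) [Field F] [Fintype F] (n m : ℕ)
    (a : Fin n → F)
    (hblock : ∀ i j k : Fin n, i ≤ j → j ≤ k → a i = a k → a j = a i)
    (C : Finset (Fin n)) (hC : C.card = m) :
    Nat.card {W : Submodule F (Fin n → F) //
        Module.finrank F ↥W = m ∧ pivotSet F W = C ∧
        W.map (Matrix.toLin' (Matrix.diagonal a)) ≤ W} =
      Fintype.card F ^
        (((Finset.univ ×ˢ Finset.univ : Finset (Fin n × Fin n))).filter
          (fun p => p.1 ∈ C ∧ p.2 ∉ C ∧ p.1 < p.2 ∧ a p.1 = a p.2)).card := by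
  subst hC
  set D := ((Finset.univ ×ˢ Finset.univ : Finset (Fin n × Fin n)).filter
    (fun p => p.1 ∈ C ∧ p.2 ∉ C ∧ p.1 < p.2 ∧ a p.1 = a p.2)) with hD
  have hDmem : ∀ p : Fin n × Fin n,
      p ∈ D ↔ p.1 ∈ C ∧ p.2 ∉ C ∧ p.1 < p.2 ∧ a p.1 = a p.2 := by
    intro p
    simp [hD, Finset.mem_filter, Finset.mem_product]
  set Δ := Matrix.toLin' (Matrix.diagonal a) with hΔ
  have hΔapp : ∀ (w : Fin n → F) (i : Fin n), Δ w i = a i * w i := by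
    intro w i
    rw [hΔ, Matrix.toLin'_apply, Matrix.mulVec_diagonal]
  -- the RREF rows attached to a choice of free entries
  set rows : (↥D → F) → ↥C → (Fin n → F) := fun e c j =>
    if j = (c : Fin n) then 1
    else if h : ((c : Fin n), j) ∈ D then e ⟨((c : Fin n), j), h⟩ else 0 with hrows
  have h1 : ∀ (e : ↥D → F) (c : ↥C), rows e c (c : Fin n) = 1 := by
    intro e c; simp [hrows]
  have h2 : ∀ (e : ↥D → F) (c c' : ↥C), c ≠ c' → rows e c (c' : Fin n) = 0 := by
    intro e c c' hne
    have hne' : (c' : Fin n) ≠ (c : Fin n) := fun h => hne (Subtype.ext h.symm)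
    have hnd : ((c : Fin n), (c' : Fin n)) ∉ D := by
      rw [hDmem]
      intro hmem
      exact hmem.2.1 c'.2
    simp [hrows, hne', hnd]
  have h3 : ∀ (e : ↥D → F) (c : ↥C) (j : Fin n), j < (c : Fin n) → rows e c j = 0 := by
    intro e c j hj
    have hne' : j ≠ (c : Fin n) := ne_of_lt hj
    have hnd : ((c : Fin n), j) ∉ D := by
      rw [hDmem]
      intro hmem
      exact absurd hmem.2.2.1 (not_lt.mpr (le_of_lt hj))
    simp [hrows, hne', hnd]
  have heig : ∀ (e : ↥D → F) (c : ↥C) (j : Fin n),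
      a j * rows e c j = a (c : Fin n) * rows e c j := by
    intro e c j
    by_cases hjc : j = (c : Fin n)
    · rw [hjc]
    · by_cases hd : ((c : Fin n), j) ∈ D
      · rw [(hDmem _).mp hd |>.2.2.2]
      · simp [hrows, hjc, hd]
  -- the map from free entries to subspaces
  set Φ : (↥D → F) → Submodule F (Fin n → F) :=
    fun e => Submodule.span F (Set.range (rows e)) with hΦ
  have hΦprop : ∀ e : ↥D → F,
      Module.finrank F (Φ e) = C.card ∧ pivotSet F (Φ e) = C ∧ (Φ e).map Δ ≤ Φ e := by
    intro e
    refine ⟨rref_finrank (h1 e) (h2 e), rref_pivotSet (h1 e) (h2 e) (h3 e), ?_⟩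
    rw [hΦ, Submodule.map_span, Submodule.span_le]
    rintro _ ⟨_, ⟨c, rfl⟩, rfl⟩
    have : Δ (rows e c) = a (c : Fin n) • rows e c := by
      funext j
      rw [hΔapp]
      exact heig e c j
    rw [this]
    exact Submodule.smul_mem _ _ (Submodule.subset_span ⟨c, rfl⟩)
  set Φ' : (↥D → F) → {W : Submodule F (Fin n → F) //
      Module.finrank F ↥W = C.card ∧ pivotSet F W = C ∧ W.map Δ ≤ W} :=
    fun e => ⟨Φ e, hΦprop e⟩ with hΦ'
  have hbij : Function.Bijective Φ' := by
    constructor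
    · -- injective
      intro e e' hee
      have hspan : Φ e = Φ e' := congrArg Subtype.val hee
      have hrowseq : ∀ c : ↥C, rows e c = rows e' c := by
        intro c
        have hspan' : Submodule.span F (Set.range (rows e))
            = Submodule.span F (Set.range (rows e')) := hspan
        have hmem : rows e c ∈ Submodule.span F (Set.range (rows e')) := by
          rw [← hspan']
          exact Submodule.subset_span ⟨c, rfl⟩
        have := rref_coords (h1 e') (h2 e') hmem
        rw [Finset.sum_eq_single c (fun b _ hb => by
            rw [h2 e c b (Ne.symm hb), zero_smul])
          (fun hc => absurd (Finset.mem_univ c) hc)] at this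
        rw [h1 e c, one_smul] at this
        exact this
      funext p
      have hc1 : p.1.1 ∈ C := ((hDmem p.1).mp p.2).1
      have hne : p.1.2 ≠ p.1.1 := ne_of_gt ((hDmem p.1).mp p.2).2.2.1
      have hkey := congrFun (hrowseq ⟨p.1.1, hc1⟩) p.1.2
      have hval : ∀ e'' : ↥D → F, rows e'' ⟨p.1.1, hc1⟩ p.1.2 = e'' p := by
        intro e''
        rw [hrows]
        simp only
        rw [if_neg hne, dif_pos (show (p.1.1, p.1.2) ∈ D from p.2)]
      rw [hval e, hval e'] at hkey
      exact hkey
    · -- surjective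
      rintro ⟨W, hrank, hpiv, hinv⟩
      obtain ⟨r, hmem, hr1, hr2, hr3, hspan⟩ := exists_rref_basis hrank hpiv
      -- eigen property of r from invariance
      have hreig : ∀ (c : ↥C) (j : Fin n), a j * r c j = a (c : Fin n) * r c j := by
        intro c
        have hu : Δ (r c) - a (c : Fin n) • r c ∈ W :=
          sub_mem (hinv (Submodule.mem_map_of_mem (hmem c)))
            (Submodule.smul_mem _ _ (hmem c))
        have h0 : ∀ x ∈ C, (Δ (r c) - a (c : Fin n) • r c) x = 0 := by
          intro x hx
          simp only [Pi.sub_apply, Pi.smul_apply, smul_eq_mul]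
          rw [hΔapp]
          by_cases hxc : (⟨x, hx⟩ : ↥C) = c
          · have : x = (c : Fin n) := congrArg Subtype.val hxc
            rw [this]
            ring
          · rw [hr2 c ⟨x, hx⟩ (fun h => hxc (Subtype.ext (congrArg Subtype.val h).symm))]
            ring
        have hz := vanish_on_pivots hpiv hu h0
        intro j
        have := congrFun hz j
        simp only [Pi.sub_apply, Pi.smul_apply, smul_eq_mul, Pi.zero_apply] at this
        rw [hΔapp] at this
        exact sub_eq_zero.mp this
      set e : ↥D → F := fun p => r ⟨p.1.1, ((hDmem p.1).mp p.2).1⟩ p.1.2 with he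
      have hre : ∀ c : ↥C, rows e c = r c := by
        intro c
        funext j
        by_cases hjc : j = (c : Fin n)
        · rw [hjc, h1 e c, hr1 c]
        · by_cases hd : ((c : Fin n), j) ∈ D
          · have h4 : rows e c j = e ⟨((c : Fin n), j), hd⟩ := by
              rw [hrows]; simp only; rw [if_neg hjc, dif_pos hd]
            rw [h4]
          · have hz : rows e c j = 0 := by
              rw [hrows]; simp only; rw [if_neg hjc, dif_neg hd]
            rw [hz]
            symm
            -- show r c j = 0
            rcases lt_trichotomy j (c : Fin n) with hlt | heq | hgt
            · exact hr3 c j hlt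
            · exact absurd heq hjc
            · by_cases hjC : j ∈ C
              · exact hr2 c ⟨j, hjC⟩ (fun h => hjc (congrArg Subtype.val h).symm)
              · have haj : a (c : Fin n) ≠ a j := by
                  intro haeq
                  exact hd ((hDmem _).mpr ⟨c.2, hjC, hgt, haeq⟩)
                by_contra hne0
                exact haj (mul_right_cancel₀ hne0 ((hreig c j).symm))
      have hfinal : Φ e = W := by
        show Submodule.span F (Set.range (rows e)) = W
        rw [funext hre, hspan]
      exact ⟨e, Subtype.ext hfinal⟩
  rw [← Nat.card_eq_of_bijective Φ' hbij, Nat.card_fun, Nat.card_eq_fintype_card,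
    Nat.card_eq_fintype_card, Fintype.card_coe]
end

section
/- For every set partition A of {1,…,n} of shape μ' (written with blocks as columns, elements of each block listed increasingly downward, blocks ordered by least element), sorting the multiset of i-th smallest elements of the blocks in increasing order for each i yields a standard Young tableau of shape μ. -/
open Finset
open scoped Classical

/-- The `k`-th smallest element of a finite set `s ⊆ {0,…,n-1}` (0-indexed), with junk
value `n` when `k ≥ |s|`. -/
def kthSmallest (n : ℕ) (s : Finset ℕ) (k : ℕ) : ℕ := (s.sort (· ≤ ·)).getD k n

/-- The `i`-th row (0-indexed) of the filling associated to a set partition `P` of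
`{0,…,n-1}`: the set of `i`-th smallest elements of the blocks of `P` having more than `i`
elements.  The row, read in increasing order, is the `i`-th row of the tableau `T(P)`. -/
def rowSet (n : ℕ) (P : Finpartition (Finset.range n)) (i : ℕ) : Finset ℕ :=
  (P.parts.filter fun B => i < B.card).image fun B => kthSmallest n B i

lemma kth_eq_get {n : ℕ} {s : Finset ℕ} {k : ℕ} (h : k < s.card) :
    kthSmallest n s k = (s.sort (· ≤ ·)).get ⟨k, by simpa [Finset.length_sort] using h⟩ := by
  unfold kthSmallest
  rw [List.getD_eq_getElem _ _ (by simpa [Finset.length_sort] using h)]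
  simp

lemma kth_mem {n : ℕ} {s : Finset ℕ} {k : ℕ} (h : k < s.card) : kthSmallest n s k ∈ s := by
  rw [kth_eq_get h]
  exact (Finset.mem_sort (· ≤ ·)).1 (List.get_mem _ _)

lemma kth_strictMono {n : ℕ} {s : Finset ℕ} {j k : ℕ} (hjk : j < k) (h : k < s.card) :
    kthSmallest n s j < kthSmallest n s k := by
  rw [kth_eq_get (lt_trans hjk h), kth_eq_get h]
  exact (Finset.sortedLT_sort s).strictMono_get (by simpa using hjk)

lemma kth_mono {n : ℕ} {s : Finset ℕ} {j k : ℕ} (hjk : j ≤ k) (h : k < s.card) :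
    kthSmallest n s j ≤ kthSmallest n s k := by
  rcases hjk.lt_or_eq with h' | rfl
  · exact (kth_strictMono h' h).le
  · exact le_rfl

lemma kth_exists {n : ℕ} {s : Finset ℕ} {x : ℕ} (hx : x ∈ s) :
    ∃ k < s.card, kthSmallest n s k = x := by
  have hxl : x ∈ s.sort (· ≤ ·) := (Finset.mem_sort _).2 hx
  have hidx : (s.sort (· ≤ ·)).idxOf x < (s.sort (· ≤ ·)).length :=
    List.idxOf_lt_length_iff.2 hxl
  refine ⟨(s.sort (· ≤ ·)).idxOf x, by simpa [Finset.length_sort] using hidx, ?_⟩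
  rw [kth_eq_get (by simpa [Finset.length_sort] using hidx)]
  simpa using List.getElem_idxOf hidx

/-- If at least `j+1` elements of `s` are `< a`, then the `j`-th smallest is `< a`. -/
lemma kth_lt_of_card_filter {n : ℕ} {s : Finset ℕ} {a j : ℕ}
    (h : j < (s.filter (· < a)).card) : kthSmallest n s j < a := by
  by_contra hge
  push_neg at hge
  have hj : j < s.card := lt_of_lt_of_le h (Finset.card_le_card (Finset.filter_subset _ _))
  have hcard : (s.filter (· < a)).card ≤ j := by
    have : (s.filter (· < a)).card ≤ (Finset.range j).card := by
      apply Finset.card_le_card_of_injOn (fun x => (s.sort (· ≤ ·)).idxOf x)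
      · intro x hx
        simp only [Finset.mem_coe, Finset.mem_filter] at hx
        have hxl : x ∈ s.sort (· ≤ ·) := (Finset.mem_sort _).2 hx.1
        have hidx : (s.sort (· ≤ ·)).idxOf x < (s.sort (· ≤ ·)).length := List.idxOf_lt_length_iff.2 hxl
        simp only [Finset.mem_coe, Finset.mem_range]
        by_contra hji
        push_neg at hji
        have : kthSmallest n s j ≤ x := by
          calc kthSmallest n s j ≤ kthSmallest n s ((s.sort (· ≤ ·)).idxOf x) :=
                kth_mono hji (by simpa [Finset.length_sort] using hidx)
            _ = x := by
                rw [kth_eq_get (by simpa [Finset.length_sort] using hidx)]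
                simpa using List.getElem_idxOf hidx
        exact absurd (lt_of_le_of_lt this hx.2) (not_lt.2 hge)
      · intro x hx y hy hxy
        simp only [Finset.coe_filter, Set.mem_setOf_eq] at hx hy
        have hxl : x ∈ s.sort (· ≤ ·) := (Finset.mem_sort _).2 hx.1
        have hyl : y ∈ s.sort (· ≤ ·) := (Finset.mem_sort _).2 hy.1
        have h1 := List.getElem_idxOf (List.idxOf_lt_length_iff.2 hxl)
        have h2 := List.getElem_idxOf (List.idxOf_lt_length_iff.2 hyl)
        rw [← h1, ← h2]
        simp_rw [hxy]
    simpa using this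
  exact absurd h (not_lt.2 hcard)

/-- At least `j+1` elements of `s` are `≤` its `j`-th smallest element. -/
lemma card_filter_le_kth {n : ℕ} {s : Finset ℕ} {j : ℕ} (h : j < s.card) :
    j + 1 ≤ (s.filter (· ≤ kthSmallest n s j)).card := by
  have : (Finset.range (j + 1)).card ≤ (s.filter (· ≤ kthSmallest n s j)).card := by
    apply Finset.card_le_card_of_injOn (fun k => kthSmallest n s k)
    · intro k hk
      simp only [Finset.mem_coe, Finset.mem_range] at hk
      have hks : k < s.card := lt_of_lt_of_le hk h
      exact Finset.mem_filter.2 ⟨kth_mem hks, kth_mono (Nat.lt_succ_iff.1 hk) h⟩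
    · intro x hx y hy hxy
      simp only [Finset.coe_range, Set.mem_Iio] at hx hy
      by_contra hne
      rcases Nat.lt_or_ge x y with h' | h'
      · exact absurd hxy (ne_of_lt (kth_strictMono h' (lt_of_lt_of_le hy h)))
      · exact absurd hxy.symm
          (ne_of_lt (kth_strictMono (lt_of_le_of_ne h' (Ne.symm hne)) (lt_of_lt_of_le hx h)))
  simpa using this

lemma parts_eq_of_kth_eq {n : ℕ} {P : Finpartition (Finset.range n)} {B B' : Finset ℕ}
    {k k' : ℕ} (hB : B ∈ P.parts) (hB' : B' ∈ P.parts) (hk : k < B.card) (hk' : k' < B'.card)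
    (h : kthSmallest n B k = kthSmallest n B' k') : B = B' :=
  P.eq_of_mem_parts hB hB' (kth_mem hk) (h ▸ kth_mem hk')

lemma card_rowSet (n : ℕ) (P : Finpartition (Finset.range n)) (i : ℕ) :
    (rowSet n P i).card = (P.parts.filter fun B => i < B.card).card := by
  apply Finset.card_image_of_injOn
  intro B hB B' hB' h
  simp only [Finset.coe_filter, Set.mem_setOf_eq] at hB hB'
  exact parts_eq_of_kth_eq hB.1 hB'.1 hB.2 hB'.2 h

/-- For every set partition `P` of `{0,…,n-1}` (of shape `μ'`), sorting for each `i` the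
`i`-th smallest elements of the blocks in increasing order yields a standard Young tableau
of shape `μ`: its rows and columns are strictly increasing, the row lengths are weakly
decreasing, and its entries are exactly `{0,…,n-1}`, each appearing once. -/
theorem setPartition_yields_standard_tableau (n : ℕ) (P : Finpartition (Finset.range n)) :
    (∀ i j : ℕ, j + 1 < (rowSet n P i).card →
      kthSmallest n (rowSet n P i) j < kthSmallest n (rowSet n P i) (j + 1)) ∧
    (∀ i j : ℕ, j < (rowSet n P (i + 1)).card →
      kthSmallest n (rowSet n P i) j < kthSmallest n (rowSet n P (i + 1)) j) ∧
    (∀ i : ℕ, (rowSet n P (i + 1)).card ≤ (rowSet n P i).card) ∧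
    ((Finset.range n).biUnion fun i => rowSet n P i) = Finset.range n ∧
    (∀ i i' : ℕ, i ≠ i' → Disjoint (rowSet n P i) (rowSet n P i')) := by
  refine ⟨fun i j h => kth_strictMono (Nat.lt_succ_self j) h, ?_, ?_, ?_, ?_⟩
  · -- columns strictly increasing
    intro i j h
    set a := kthSmallest n (rowSet n P (i + 1)) j with ha
    set S := (P.parts.filter fun B => i + 1 < B.card).filter
        (fun B => kthSmallest n B (i + 1) ≤ a) with hS
    have hSimg : S.image (fun B => kthSmallest n B (i + 1))
        = (rowSet n P (i + 1)).filter (· ≤ a) := by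
      rw [rowSet, Finset.filter_image]
    have hScard : j + 1 ≤ S.card := by
      have hinj : Set.InjOn (fun B => kthSmallest n B (i + 1)) ↑S := by
        intro B hB B' hB' hEq
        simp only [hS, Finset.coe_filter, Set.mem_setOf_eq, Finset.mem_filter] at hB hB'
        exact parts_eq_of_kth_eq hB.1.1 hB'.1.1 hB.1.2 hB'.1.2 hEq
      have := Finset.card_image_of_injOn hinj
      rw [hSimg] at this
      rw [← this]
      exact card_filter_le_kth h
    -- now the i-th smallest elements of blocks in S
    have hTsub : S.image (fun B => kthSmallest n B i) ⊆ (rowSet n P i).filter (· < a) := by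
      intro x hx
      simp only [Finset.mem_image] at hx
      obtain ⟨B, hB, rfl⟩ := hx
      simp only [hS, Finset.mem_filter] at hB
      refine Finset.mem_filter.2 ⟨?_, ?_⟩
      · exact Finset.mem_image.2 ⟨B, Finset.mem_filter.2 ⟨hB.1.1,
          lt_trans (Nat.lt_succ_self i) hB.1.2⟩, rfl⟩
      · exact lt_of_lt_of_le (kth_strictMono (Nat.lt_succ_self i) hB.1.2) hB.2
    have hTcard : S.card = (S.image (fun B => kthSmallest n B i)).card := by
      symm
      apply Finset.card_image_of_injOn
      intro B hB B' hB' hEq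
      simp only [hS, Finset.coe_filter, Set.mem_setOf_eq, Finset.mem_filter] at hB hB'
      exact parts_eq_of_kth_eq hB.1.1 hB'.1.1
        (lt_trans (Nat.lt_succ_self i) hB.1.2) (lt_trans (Nat.lt_succ_self i) hB'.1.2) hEq
    have : j < ((rowSet n P i).filter (· < a)).card := by
      calc j < j + 1 := Nat.lt_succ_self j
        _ ≤ S.card := hScard
        _ = _ := hTcard
        _ ≤ _ := Finset.card_le_card hTsub
    exact kth_lt_of_card_filter this
  · -- row lengths weakly decreasing
    intro i
    rw [card_rowSet, card_rowSet]
    refine Finset.card_le_card (fun B hB => ?_)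
    simp only [Finset.mem_filter] at hB ⊢
    exact ⟨hB.1, lt_trans (Nat.lt_succ_self i) hB.2⟩
  · -- union is range n
    apply Finset.Subset.antisymm
    · intro x hx
      simp only [Finset.mem_biUnion] at hx
      obtain ⟨i, _, hi⟩ := hx
      simp only [rowSet, Finset.mem_image, Finset.mem_filter] at hi
      obtain ⟨B, ⟨hB, hiB⟩, rfl⟩ := hi
      exact P.le hB (kth_mem hiB)
    · intro x hx
      obtain ⟨B, hB, hxB⟩ := P.exists_mem hx
      obtain ⟨k, hk, hkx⟩ := kth_exists (n := n) hxB
      have hBn : B.card ≤ n := by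
        have := Finset.card_le_card (P.le hB)
        simpa using this
      refine Finset.mem_biUnion.2 ⟨k, Finset.mem_range.2 (lt_of_lt_of_le hk hBn), ?_⟩
      exact Finset.mem_image.2 ⟨B, Finset.mem_filter.2 ⟨hB, hk⟩, hkx⟩
  · -- disjointness of rows
    intro i i' hne
    rw [Finset.disjoint_left]
    intro x hx hx'
    simp only [rowSet, Finset.mem_image, Finset.mem_filter] at hx hx'
    obtain ⟨B, ⟨hB, hiB⟩, rfl⟩ := hx
    obtain ⟨B', ⟨hB', hiB'⟩, hEq⟩ := hx'
    have hBB' : B = B' := parts_eq_of_kth_eq hB hB' hiB hiB' hEq.symm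
    subst hBB'
    rcases hne.lt_or_gt with h' | h'
    · exact absurd hEq.symm (ne_of_lt (kth_strictMono h' hiB'))
    · exact absurd hEq (ne_of_lt (kth_strictMono h' hiB))
end

section
/- For partitions μ, ν of n with ν having k parts, let a_{μν}(q) = Σ ∏_{j=1}^k ψ_{μ^j/μ^{j-1}}(q) over chains ∅ = μ⁰ ⊆ ⋯ ⊆ μ^k = μ with μ^j/μ^{j-1} a horizontal ν_j-strip, where ψ_{λ/ρ}(q) = ∏_{i≥1} [λ_i − λ_{i+1} choose λ_i − ρ_i]_q. Then b_{μν}(q) = (∏_{i≥1}[ν_i]_q! / ∏_{i≥1}[μ_i − μ_{i+1}]_q!) · a_{μν}(q), where b_{μν}(q) = Σ over the same chains of ∏_j θ_{μ^j/μ^{j-1}}(q) with θ_{λ/ρ}(q) = ([|λ|−|ρ|]_q!/[λ₁−ρ₁]_q!) ∏_{i≥1} [ρ_i−ρ_{i+1} choose λ_{i+1}−ρ_{i+1}]_q. -/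
open Finset
open scoped Classical

/-- The `q`-analog `[n]_q = 1 + q + ⋯ + q^{n-1}` as a rational function in `q`. -/
noncomputable def qInt (n : ℕ) : RatFunc ℚ := ∑ i ∈ Finset.range n, RatFunc.X ^ i

/-- The `q`-factorial `[n]_q!`. -/
noncomputable def qFact : ℕ → RatFunc ℚ
  | 0 => 1
  | n + 1 => qFact n * qInt (n + 1)

/-- The Gaussian binomial coefficient `[a choose b]_q`. -/
noncomputable def qBinom (a b : ℕ) : RatFunc ℚ :=
  if b ≤ a then qFact a / (qFact b * qFact (a - b)) else 0

/-- A function `μ : ℕ → ℕ` is an integer partition (0-indexed parts, trailing zeros). -/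
def IsPartitionFun (μ : ℕ → ℕ) : Prop :=
  (∀ i, μ (i + 1) ≤ μ i) ∧ ∃ N, ∀ i, N ≤ i → μ i = 0

/-- The size `|μ|` of a partition. -/
noncomputable def psize (μ : ℕ → ℕ) : ℕ := ∑ᶠ i, μ i

/-- `μ/ρ` is a horizontal strip: `ρ ⊆ μ` and `μ_{i+1} ≤ ρ_i` for all `i`. -/
def IsHorizStrip (ρ μ : ℕ → ℕ) : Prop :=
  (∀ i, ρ i ≤ μ i) ∧ ∀ i, μ (i + 1) ≤ ρ i

/-- `θ_{μ/ρ}(q) = ([|μ|−|ρ|]_q!/[μ₁−ρ₁]_q!) ∏_{i≥1} [ρ_i−ρ_{i+1} choose μ_{i+1}−ρ_{i+1}]_q`. -/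
noncomputable def theta (μ ρ : ℕ → ℕ) : RatFunc ℚ :=
  (qFact (psize μ - psize ρ) / qFact (μ 0 - ρ 0)) *
    ∏ᶠ i : ℕ, qBinom (ρ i - ρ (i + 1)) (μ (i + 1) - ρ (i + 1))

/-- `ψ_{μ/ρ}(q) = ∏_{i≥1} [μ_i−μ_{i+1} choose μ_i−ρ_i]_q`. -/
noncomputable def psiStrip (μ ρ : ℕ → ℕ) : RatFunc ℚ :=
  ∏ᶠ i : ℕ, qBinom (μ i - μ (i + 1)) (μ i - ρ i)

/-- The chain condition: `∅ = c 0 ⊆ c 1 ⊆ ⋯ ⊆ c k = μ` with each `c (j+1) / c j` a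
horizontal strip of size `ν j`. -/
def IsStripChain (μ ν : ℕ → ℕ) (k : ℕ) (c : Fin (k + 1) → ℕ → ℕ) : Prop :=
  (∀ i, c 0 i = 0) ∧ (∀ i, c (Fin.last k) i = μ i) ∧
  (∀ j : Fin (k + 1), IsPartitionFun (c j)) ∧
  (∀ j : Fin k, IsHorizStrip (c j.castSucc) (c j.succ) ∧
    psize (c j.succ) = psize (c j.castSucc) + ν j.val)

/-- `b_{μν}(q)`: sum over all chains of partitions from `∅` to `μ` with horizontal strips
of sizes `ν 0, …, ν (k-1)` of the product of the `θ` weights. -/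
noncomputable def bPoly (μ ν : ℕ → ℕ) (k : ℕ) : RatFunc ℚ :=
  ∑ᶠ c : Fin (k + 1) → ℕ → ℕ,
    if IsStripChain μ ν k c then ∏ j : Fin k, theta (c j.succ) (c j.castSucc) else 0

/-- `a_{μν}(q)`: the coefficient of `m_ν` in the monomial expansion of the `q`-Whittaker
function `W_μ`, given by the sum over horizontal-strip chains of the product of `ψ` weights. -/
noncomputable def aPoly (μ ν : ℕ → ℕ) (k : ℕ) : RatFunc ℚ :=
  ∑ᶠ c : Fin (k + 1) → ℕ → ℕ,
    if IsStripChain μ ν k c then ∏ j : Fin k, psiStrip (c j.succ) (c j.castSucc) else 0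

/-! Put `D(λ) = ∏_i [λ_i − λ_{i+1}]_q!` and, for a horizontal strip `λ/ρ`,
`x = λ_{i+1} − ρ_{i+1}`, `y = ρ_i − λ_{i+1}`, `z = λ_i − ρ_i`. The `i`-th factor of `θ_{λ/ρ} D(λ)`
times `[x]_q!` and the `i`-th factor of `ψ_{λ/ρ} D(ρ)` times `[z]_q!` are both
`[x + y]_q! [z + y]_q! / [y]_q!`. Over all `i` the extra factors telescope to `[λ₁ − ρ₁]_q!`,
the denominator of `θ`, so `θ_{λ/ρ} D(λ) = [|λ| − |ρ|]_q! ψ_{λ/ρ} D(ρ)`. Along a chain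
`∅ = μ⁰ ⊆ ⋯ ⊆ μᵏ = μ`, `D` telescopes once more, from `D(∅) = 1` to `D(μ)`, so every chain
contributes to `b_{μν}` exactly `∏_j [ν_j]_q! / D(μ)` times its contribution to `a_{μν}`. -/

theorem Fin.prod_mul_last_eq_prod_mul_zero {M : Type*} [CommMonoid M] {k : ℕ}
    {f g : Fin k → M} {F : Fin (k + 1) → M}
    (h : ∀ j : Fin k, f j * F j.succ = g j * F j.castSucc) :
    (∏ j, f j) * F (Fin.last k) = (∏ j, g j) * F 0 := by
  induction k with
  | zero => simp [Fin.last]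
  | succ k ih =>
    have ih' := ih (f := fun j => f j.castSucc) (g := fun j => g j.castSucc)
      (F := fun j => F j.castSucc) fun j => by simpa only [Fin.succ_castSucc] using h j.castSucc
    calc (∏ j, f j) * F (Fin.last (k + 1))
        = (∏ j : Fin k, f j.castSucc) * (f (Fin.last k) * F (Fin.last k).succ) := by
          rw [Fin.prod_univ_castSucc, Fin.succ_last, mul_assoc]
      _ = (∏ j : Fin k, f j.castSucc) * F (Fin.last k).castSucc * g (Fin.last k) := by
          rw [h, mul_comm (g _), mul_assoc]
      _ = (∏ j, g j) * F 0 := by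
          rw [ih', Fin.prod_univ_castSucc, Fin.castSucc_zero, mul_right_comm]

theorem finprod_eq_prod_range_of_eq_one {M : Type*} [CommMonoid M] {f : ℕ → M} {N : ℕ}
    (h : ∀ i, N ≤ i → f i = 1) : ∏ᶠ i, f i = ∏ i ∈ range N, f i :=
  finprod_eq_prod_of_mulSupport_subset f fun i hi => by
    by_contra hiN
    exact hi (h i (by simpa using hiN))

theorem qInt_ne_zero {n : ℕ} (hn : 0 < n) : qInt n ≠ 0 := by
  have hpoly : qInt n = algebraMap (Polynomial ℚ) (RatFunc ℚ)
      (∑ i ∈ range n, Polynomial.X ^ i) := by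
    simp [qInt, RatFunc.algebraMap_X]
  rw [hpoly, Ne, FaithfulSMul.algebraMap_eq_zero_iff]
  intro h
  have := congrArg (Polynomial.eval 1) h
  simp only [Polynomial.eval_finsetSum, Polynomial.eval_pow, Polynomial.eval_X, one_pow,
    sum_const, card_range, nsmul_eq_mul, mul_one, Polynomial.eval_zero, Nat.cast_eq_zero] at this
  omega

theorem qFact_ne_zero (n : ℕ) : qFact n ≠ 0 := by
  induction n with
  | zero => simp [qFact]
  | succ n ih => exact mul_ne_zero ih (qInt_ne_zero n.succ_pos)

theorem qBinom_add_left_mul_qFact (a b : ℕ) :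
    qBinom (a + b) a * qFact a = qFact (a + b) / qFact b := by
  rw [qBinom, if_pos (Nat.le_add_right a b), Nat.add_sub_cancel_left]
  field_simp [qFact_ne_zero]

theorem qBinom_mul_qFact_mul_qFact_comm (x y z : ℕ) :
    qBinom (x + y) x * qFact (z + y) * qFact x = qBinom (z + y) z * qFact (x + y) * qFact z := by
  rw [mul_right_comm, qBinom_add_left_mul_qFact, mul_right_comm, qBinom_add_left_mul_qFact]
  ring

theorem IsHorizStrip.qBinom_mul_qFact_mul_qFact {rho lam : ℕ → ℕ} (h : IsHorizStrip rho lam)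
    (i : ℕ) :
    qBinom (rho i - rho (i + 1)) (lam (i + 1) - rho (i + 1)) * qFact (lam i - lam (i + 1)) *
        qFact (lam (i + 1) - rho (i + 1))
      = qBinom (lam i - lam (i + 1)) (lam i - rho i) * qFact (rho i - rho (i + 1)) *
        qFact (lam i - rho i) := by
  have := h.1 i; have := h.1 (i + 1); have := h.2 i
  have hx : rho i - rho (i + 1) = (lam (i + 1) - rho (i + 1)) + (rho i - lam (i + 1)) := by omega
  have hz : lam i - lam (i + 1) = (lam i - rho i) + (rho i - lam (i + 1)) := by omega
  rw [hx, hz]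
  exact qBinom_mul_qFact_mul_qFact_comm _ _ _

noncomputable def qFactDiffs (lam : ℕ → ℕ) : RatFunc ℚ := ∏ᶠ i, qFact (lam i - lam (i + 1))

theorem qFactDiffs_ne_zero (lam : ℕ → ℕ) : qFactDiffs lam ≠ 0 :=
  finprod_induction (· ≠ 0) one_ne_zero (fun _ _ => mul_ne_zero) fun _ => qFact_ne_zero _

theorem qFactDiffs_zero : qFactDiffs 0 = 1 :=
  finprod_eq_one_of_forall_eq_one fun _ => rfl

theorem qFactDiffs_eq_prod_range {lam : ℕ → ℕ} {N : ℕ} (h : ∀ i, N ≤ i → lam i = 0) :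
    qFactDiffs lam = ∏ i ∈ range N, qFact (lam i - lam (i + 1)) :=
  finprod_eq_prod_range_of_eq_one fun i hi => by simp [h i hi, h (i + 1) (by omega), qFact]

theorem theta_mul_qFactDiffs {lam rho : ℕ → ℕ} (hlam : ∃ N, ∀ i, N ≤ i → lam i = 0)
    (hstrip : IsHorizStrip rho lam) :
    theta lam rho * qFactDiffs lam
      = qFact (psize lam - psize rho) * psiStrip lam rho * qFactDiffs rho := by
  obtain ⟨N, hN⟩ := hlam
  have hNrho : ∀ i, N ≤ i → rho i = 0 := fun i hi => Nat.eq_zero_of_le_zero (hN i hi ▸ hstrip.1 i)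
  have hvanish : ∀ i, N ≤ i → lam i = 0 ∧ lam (i + 1) = 0 ∧ rho i = 0 ∧ rho (i + 1) = 0 :=
    fun i hi => ⟨hN i hi, hN _ (by omega), hNrho i hi, hNrho _ (by omega)⟩
  set t := fun i => qBinom (rho i - rho (i + 1)) (lam (i + 1) - rho (i + 1))
  set p := fun i => qBinom (lam i - lam (i + 1)) (lam i - rho i)
  have htel := Fin.prod_mul_last_eq_prod_mul_zero (F := fun i : Fin (N + 1) => qFact (lam i - rho i))
    (f := fun i : Fin N => t i * qFact (lam i - lam (i + 1)))
    (g := fun i : Fin N => p i * qFact (rho i - rho (i + 1)))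
    fun i => by simpa using hstrip.qBinom_mul_qFact_mul_qFact i
  simp only [prod_mul_distrib, Fin.val_last, Fin.val_zero, hN N le_rfl, hNrho N le_rfl,
    tsub_self, qFact, mul_one] at htel
  have ht : ∏ᶠ i, t i = ∏ i ∈ range N, t i := finprod_eq_prod_range_of_eq_one fun i hi => by
    obtain ⟨-, h₂, h₃, h₄⟩ := hvanish i hi
    simp [t, h₂, h₃, h₄, qBinom, qFact]
  have hp : psiStrip lam rho = ∏ i ∈ range N, p i := finprod_eq_prod_range_of_eq_one fun i hi => by
    obtain ⟨h₁, h₂, h₃, -⟩ := hvanish i hi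
    simp [h₁, h₂, h₃, qBinom, qFact]
  rw [theta, ht, hp, qFactDiffs_eq_prod_range hN, qFactDiffs_eq_prod_range hNrho]
  simp only [Finset.prod_range]
  have := qFact_ne_zero (lam 0 - rho 0)
  field_simp
  linear_combination qFact (psize lam - psize rho) * htel

theorem prod_theta_mul_qFactDiffs {μ ν : ℕ → ℕ} {k : ℕ} {c : Fin (k + 1) → ℕ → ℕ}
    (hc : IsStripChain μ ν k c) :
    (∏ j : Fin k, theta (c j.succ) (c j.castSucc)) * qFactDiffs μ
      = (∏ j ∈ range k, qFact (ν j)) * ∏ j : Fin k, psiStrip (c j.succ) (c j.castSucc) := by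
  obtain ⟨hfirst, hlast, hpart, hstrip⟩ := hc
  have htel := Fin.prod_mul_last_eq_prod_mul_zero (F := fun j => qFactDiffs (c j))
    (g := fun j : Fin k => qFact (ν j) * psiStrip (c j.succ) (c j.castSucc)) fun j => by
      have hsize : psize (c j.succ) - psize (c j.castSucc) = ν j := by
        rw [(hstrip j).2]; omega
      rw [theta_mul_qFactDiffs (hpart j.succ).2 (hstrip j).1, hsize]
  rw [funext hlast, funext hfirst, Pi.zero_def.symm, qFactDiffs_zero, mul_one, prod_mul_distrib]
    at htel
  rwa [Finset.prod_range]

theorem bPoly_eq_qWhittaker_coeff_general (k : ℕ) (μ ν : ℕ → ℕ) :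
    bPoly μ ν k =
      ((∏ j ∈ Finset.range k, qFact (ν j)) / ∏ᶠ i : ℕ, qFact (μ i - μ (i + 1))) *
        aPoly μ ν k := by
  rw [bPoly, aPoly, mul_finsum]
  refine finsum_congr fun c => ?_
  split_ifs with hc
  · rw [div_mul_eq_mul_div]
    exact (eq_div_iff (qFactDiffs_ne_zero μ)).2 (prod_theta_mul_qFactDiffs hc)
  · rw [mul_zero]

/-- `b_{μν}(q) = (∏_i [ν_i]_q! / ∏_i [μ_i − μ_{i+1}]_q!) ⋅ a_{μν}(q)`. -/
theorem bPoly_eq_qWhittaker_coeff (n k : ℕ) (μ ν : ℕ → ℕ)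
    (hμ : IsPartitionFun μ) (hμn : psize μ = n)
    (hνanti : ∀ j, j + 1 < k → ν (j + 1) ≤ ν j) (hνpos : ∀ j < k, 0 < ν j)
    (hνzero : ∀ j, k ≤ j → ν j = 0) (hνsum : ∑ j ∈ Finset.range k, ν j = n) :
    bPoly μ ν k =
      ((∏ j ∈ Finset.range k, qFact (ν j)) / ∏ᶠ i : ℕ, qFact (μ i - μ (i + 1))) *
        aPoly μ ν k :=
  bPoly_eq_qWhittaker_coeff_general k μ ν
end

section
/- The set partitions of {1,…,2m} into blocks of size 2 (chord diagrams on 2m points) weighted by q^{number of crossings} have generating polynomial T_m(q) satisfying T_m(q)·(1−q)^m = Σ_{i=0}^m (−1)^i [C(2m, m−i) − C(2m, m−i−1)] q^{binom(i+1,2)} (the Touchard–Riordan formula). -/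
open Finset
open scoped Classical

/-- The number of crossings of a matching `M`, whose blocks are recorded as pairs `(a, b)`
with `a < b`: pairs of blocks `(a,b)`, `(c,d)` with `a < c < b < d`. -/
def crossNum (M : Finset (ℕ × ℕ)) : ℕ :=
  ((M ×ˢ M).filter fun p => p.1.1 < p.2.1 ∧ p.2.1 < p.1.2 ∧ p.1.2 < p.2.2).card

/-- The Touchard–Riordan generating polynomial `T_m(q)`: the sum of `q^{crossings}` over all
perfect matchings (chord diagrams) of `{0,…,2m-1}`, a matching being recorded as a set of
pairs `(a, b)` with `a < b` such that every point lies in exactly one pair. -/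
noncomputable def touchardPoly (m : ℕ) : Polynomial ℤ :=
  ∑ M ∈ ((Finset.range (2 * m) ×ˢ Finset.range (2 * m)).powerset).filter
      (fun M => (∀ p ∈ M, p.1 < p.2) ∧
        ∀ x < 2 * m, ∃! p, p ∈ M ∧ (x = p.1 ∨ x = p.2)),
    Polynomial.X ^ crossNum M

/-!
Scan a chord diagram from left to right: each point either opens a chord or closes one of the
`k` chords currently open, and closing the one opened `j`-th from the right creates exactly `j`
crossings. So `T_m(q)` is a weighted count of Dyck paths of length `2m` in which a down-step from
height `k` weighs `[k]_q = 1 + q + ⋯ + q^{k-1}`; multiplying by `(1 - q)^m` turns these weights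
into `1 - q^k`. Those are the recurrence coefficients of the continuous `q`-Hermite polynomials
`H_k(z + z⁻¹) = ∑_r [k choose r]_q z^{k-2r}`, so the path count is `L((z + z⁻¹)^{2m})` for the
linear functional `L` with `L(H_k) = δ_{k0}`. By Gauss's `q`-binomial theorem this functional is
`L(z^{2i}) = (-1)^i q^{i(i+1)/2}`, `L(z^{odd}) = 0`, and expanding `(z + z⁻¹)^{2m}` gives the
formula.
-/

section PathWeight

variable {R : Type*} [CommSemiring R]

/-- The total weight of the paths of `n` steps `±1` from height `k` down to `0` that never go
below `0`, a down-step from height `j` weighing `w j`. -/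
def pathWeight (w : ℕ → R) : ℕ → ℕ → R
  | 0, k => if k = 0 then 1 else 0
  | n + 1, 0 => pathWeight w n 1
  | n + 1, k + 1 => pathWeight w n (k + 2) + w (k + 1) * pathWeight w n k

theorem pathWeight_mul_const (w : ℕ → R) (c : R) (n k : ℕ) :
    pathWeight (fun j => w j * c) n k = pathWeight w n k * c ^ ((n + k) / 2) := by
  induction n generalizing k with
  | zero => cases k <;> simp [pathWeight]
  | succ n ih =>
    cases k with
    | zero => simp only [pathWeight, ih]
    | succ k =>
      simp only [pathWeight, ih]
      rw [show (n + 1 + (k + 1)) / 2 = (n + k) / 2 + 1 by omega,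
        show (n + (k + 2)) / 2 = (n + k) / 2 + 1 by omega]
      ring

theorem pathWeight_eq_moment {A : Type*} [Semiring A] [Algebra R A] (w : ℕ → R)
    (φ : A →ₗ[R] R) (x : A) (p : ℕ → A) (hp0 : x * p 0 = p 1)
    (hp : ∀ k, x * p (k + 1) = p (k + 2) + w (k + 1) • p k)
    (hφ : ∀ k, φ (p k) = if k = 0 then 1 else 0) (n k : ℕ) :
    pathWeight w n k = φ (x ^ n * p k) := by
  induction n generalizing k with
  | zero => simp [pathWeight, hφ]
  | succ n ih =>
    cases k with
    | zero => rw [pathWeight, ih, pow_succ, mul_assoc, hp0]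
    | succ k =>
      rw [pathWeight, ih, ih, pow_succ, mul_assoc, hp, mul_add, mul_smul_comm, map_add,
        map_smul, smul_eq_mul]

end PathWeight

section QBinomial

variable {R : Type*}

def qChoose [Semiring R] (q : R) : ℕ → ℕ → R
  | _, 0 => 1
  | 0, _ + 1 => 0
  | n + 1, k + 1 => qChoose q n k + q ^ (k + 1) * qChoose q n (k + 1)

section Semiring
variable [CommSemiring R] (q : R)

@[simp] theorem qChoose_zero_right (n : ℕ) : qChoose q n 0 = 1 := by cases n <;> rfl

@[simp] theorem qChoose_zero_succ (k : ℕ) : qChoose q 0 (k + 1) = 0 := rfl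

theorem qChoose_succ_succ (n k : ℕ) :
    qChoose q (n + 1) (k + 1) = qChoose q n k + q ^ (k + 1) * qChoose q n (k + 1) := rfl

theorem qChoose_eq_zero_of_lt {n k : ℕ} (h : n < k) : qChoose q n k = 0 := by
  induction n generalizing k with
  | zero => obtain ⟨k, rfl⟩ := Nat.exists_eq_succ_of_ne_zero (by omega : k ≠ 0); rfl
  | succ n ih =>
    obtain ⟨k, rfl⟩ := Nat.exists_eq_succ_of_ne_zero (by omega : k ≠ 0)
    rw [qChoose_succ_succ, ih (by omega), ih (by omega), mul_zero, add_zero]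

theorem prod_add_mul_pow_eq_sum_qChoose (n : ℕ) (t u : R) :
    ∏ i ∈ range n, (t + u * q ^ i) =
      ∑ k ∈ range (n + 1), q ^ k.choose 2 * qChoose q n k * u ^ k * t ^ (n - k) := by
  induction n generalizing u with
  | zero => simp
  | succ n ih =>
    set F : ℕ → R := fun k => q ^ k.choose 2 * qChoose q n k * (u * q) ^ k
    -- the factors `i ≥ 1` are the `n` factors for `u * q` in place of `u`
    have hprod : ∏ i ∈ range (n + 1), (t + u * q ^ i) =
        (∑ k ∈ range (n + 1), F k * t ^ (n - k)) * (t + u) := by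
      rw [prod_range_succ', pow_zero, mul_one, ← ih (u * q)]
      simp only [pow_succ, mul_assoc, mul_comm q]
    have ht : t * ∑ k ∈ range (n + 1), F k * t ^ (n - k) =
        t ^ (n + 1) + ∑ k ∈ range n, F (k + 1) * t ^ (n - k) := by
      rw [mul_sum, sum_range_succ', add_comm]
      congr 1
      · simp [F, pow_succ']
      · refine sum_congr rfl fun k hk => ?_
        rw [show n - k = n - (k + 1) + 1 by have := mem_range.1 hk; omega]
        ring
    have hsum : ∑ k ∈ range (n + 1 + 1),
        q ^ k.choose 2 * qChoose q (n + 1) k * u ^ k * t ^ (n + 1 - k) =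
        t ^ (n + 1) + u * ∑ k ∈ range (n + 1), F k * t ^ (n - k) +
          ∑ k ∈ range n, F (k + 1) * t ^ (n - k) := by
      have hterm : ∀ k ∈ range (n + 1), q ^ (k + 1).choose 2 * qChoose q (n + 1) (k + 1) *
          u ^ (k + 1) * t ^ (n + 1 - (k + 1)) =
            u * (F k * t ^ (n - k)) + F (k + 1) * t ^ (n - k) := by
        intro k _
        simp only [F, qChoose_succ_succ, Nat.choose_succ_succ', Nat.choose_one_right,
          show n + 1 - (k + 1) = n - k by omega]
        ring
      rw [sum_range_succ', sum_congr rfl hterm, sum_add_distrib, ← mul_sum,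
        sum_range_succ (fun k => F (k + 1) * t ^ (n - k)) n]
      simp only [F, qChoose_eq_zero_of_lt q (Nat.lt_succ_self n), mul_zero, zero_mul, add_zero,
        Nat.choose_zero_succ, qChoose_zero_right, pow_zero, Nat.sub_zero, mul_one]
      ring
    rw [hprod, hsum, mul_add, mul_comm, ht]
    ring

end Semiring

section Ring
variable [CommRing R] (q : R)

theorem qChoose_one_mul_one_sub (n : ℕ) : qChoose q n 1 * (1 - q) = 1 - q ^ n := by
  induction n with
  | zero => simp [qChoose]
  | succ n ih =>
    rw [qChoose_succ_succ, qChoose_zero_right, add_mul, mul_assoc, ih]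
    ring

theorem qChoose_mul_one_sub_pow (n k : ℕ) :
    qChoose q n k * (1 - q ^ (n - k)) = qChoose q n (k + 1) * (1 - q ^ (k + 1)) := by
  induction n generalizing k with
  | zero => cases k <;> simp [qChoose]
  | succ n ih =>
    cases k with
    | zero =>
      simp only [qChoose_zero_right, Nat.sub_zero, zero_add, pow_one, one_mul,
        qChoose_one_mul_one_sub]
    | succ k =>
      rcases lt_or_ge n (k + 1) with h | h
      · rw [qChoose_eq_zero_of_lt q (by omega : n + 1 < k + 2),
          show n + 1 - (k + 1) = 0 by omega]
        simp
      · have e1 : q ^ (k + 1) * q ^ (n - k) = q ^ (n + 1) := by rw [← pow_add]; congr 1; omega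
        have e2 : q ^ (k + 2) * q ^ (n - (k + 1)) = q ^ (n + 1) := by
          rw [← pow_add]; congr 1; omega
        rw [qChoose_succ_succ, qChoose_succ_succ, show n + 1 - (k + 1) = n - k by omega]
        linear_combination ih k + q ^ (k + 2) * ih (k + 1) - qChoose q n (k + 1) * e1 +
          qChoose q n (k + 1) * e2

theorem qChoose_succ_mul_one_sub_pow (n k : ℕ) :
    qChoose q (n + 1) (k + 1) * (1 - q ^ (k + 1)) = (1 - q ^ (n + 1)) * qChoose q n k := by
  rcases lt_or_ge n k with h | h
  · rw [qChoose_eq_zero_of_lt q h, qChoose_eq_zero_of_lt q (by omega : n + 1 < k + 1)]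
    ring
  · have e : q ^ (k + 1) * q ^ (n - k) = q ^ (n + 1) := by rw [← pow_add]; congr 1; omega
    rw [qChoose_succ_succ]
    linear_combination -q ^ (k + 1) * qChoose_mul_one_sub_pow q n k - qChoose q n k * e

end Ring

end QBinomial

theorem neg_one_pow_mul_self {M : Type*} [Monoid M] [HasDistribNeg M] (n : ℕ) :
    (-1 : M) ^ n * (-1) ^ n = 1 := by
  rw [← pow_add, ← two_mul, pow_mul, neg_one_sq, one_pow]

section Hermite
open LaurentPolynomial

variable {R : Type*} [CommRing R] (q : R)

/-- `thetaCoeff q i = (-1)^i q^{i(i+1)/2}` for every integer `i`. -/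
def thetaCoeff : ℤ → R
  | (i : ℕ) => (-1) ^ i * q ^ (i + 1).choose 2
  | .negSucc i => -((-1) ^ i * q ^ (i + 1).choose 2)

theorem thetaCoeff_natCast (i : ℕ) : thetaCoeff q i = (-1) ^ i * q ^ (i + 1).choose 2 := rfl

theorem thetaCoeff_zero : thetaCoeff q 0 = 1 := by simpa using thetaCoeff_natCast q 0

theorem thetaCoeff_neg_sub_one (i : ℕ) : thetaCoeff q (-i - 1) = -thetaCoeff q i := by
  rw [show -(i : ℤ) - 1 = .negSucc i by omega]; rfl

noncomputable def hermiteMoment : R[T;T⁻¹] →ₗ[R] R :=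
  (AddMonoidAlgebra.basis ℤ R).constr R fun n => if Even n then thetaCoeff q (n / 2) else 0

theorem hermiteMoment_T (n : ℤ) :
    hermiteMoment q (T n) = if Even n then thetaCoeff q (n / 2) else 0 :=
  (AddMonoidAlgebra.basis ℤ R).constr_basis R _ n

noncomputable def qHermite (k : ℕ) : R[T;T⁻¹] :=
  ∑ r ∈ range (k + 1), qChoose q k r • T ((k : ℤ) - 2 * r)

theorem qHermite_zero : qHermite q 0 = 1 := by simp [qHermite]

theorem mul_qHermite_zero : (T 1 + T (-1)) * qHermite q 0 = qHermite q 1 := by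
  simp [qHermite, sum_range_succ, qChoose_succ_succ]

theorem qHermite_eq_sum_range {k N : ℕ} (h : k < N) :
    qHermite q k = ∑ r ∈ range N, qChoose q k r • T ((k : ℤ) - 2 * r) :=
  sum_subset (range_subset_range.2 h) fun r _ hr => by
    rw [qChoose_eq_zero_of_lt q (by simpa using hr), zero_smul]

theorem T_mul_qHermite (j : ℤ) {k N : ℕ} (h : k < N) :
    T j * qHermite q k = ∑ r ∈ range N, qChoose q k r • T (j + k - 2 * r) := by
  rw [qHermite_eq_sum_range q h, mul_sum]
  exact sum_congr rfl fun r _ => by rw [mul_smul_comm, ← T_add, add_sub_assoc]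

theorem qHermite_add_two (k : ℕ) : qHermite q (k + 2) =
    T (k + 2) + ∑ r ∈ range (k + 2), qChoose q (k + 2) (r + 1) • T ((k : ℤ) - 2 * r) := by
  rw [qHermite, sum_range_succ', add_comm]
  congr 1
  · simp
  · exact sum_congr rfl fun r _ => by congr 2; push_cast; ring

theorem mul_qHermite_succ (k : ℕ) : (T 1 + T (-1)) * qHermite q (k + 1) =
    qHermite q (k + 2) + (1 - q ^ (k + 1)) • qHermite q k := by
  have hup : T 1 * qHermite q (k + 1) =
      T (k + 2) + ∑ r ∈ range (k + 2), qChoose q (k + 1) (r + 1) • T ((k : ℤ) - 2 * r) := by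
    rw [T_mul_qHermite q 1 (by omega : k + 1 < k + 3), sum_range_succ', add_comm]
    congr 1
    · simp only [qChoose_zero_right, one_smul, Nat.cast_zero, mul_zero, sub_zero]
      congr 1; push_cast; ring
    · exact sum_congr rfl fun r _ => by congr 2; push_cast; ring
  have hdown : T (-1) * qHermite q (k + 1) =
      ∑ r ∈ range (k + 2), qChoose q (k + 1) r • T ((k : ℤ) - 2 * r) := by
    rw [T_mul_qHermite q (-1) (by omega : k + 1 < k + 2)]
    exact sum_congr rfl fun r _ => by congr 2; push_cast; ring
  rw [add_mul, hup, hdown, qHermite_add_two, qHermite_eq_sum_range q (by omega : k < k + 2),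
    smul_sum, add_assoc, add_assoc, ← sum_add_distrib, ← sum_add_distrib]
  congr 1
  refine sum_congr rfl fun r _ => ?_
  rw [smul_smul, ← add_smul, ← add_smul, qChoose_succ_succ q (k + 1) r]
  congr 1
  linear_combination qChoose_succ_mul_one_sub_pow q k r

theorem neg_one_pow_mul_pow_mul_thetaCoeff_sub (s r : ℕ) (hr : r ≤ 2 * s) :
    (-1) ^ s * q ^ (s.choose 2 + s ^ 2) * thetaCoeff q (s - r) =
      q ^ r.choose 2 * (-1) ^ r * (q ^ s) ^ (2 * s - r) := by
  rcases le_or_gt r s with h | h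
  · obtain ⟨i, rfl⟩ := Nat.exists_eq_add_of_le h
    have e : (r + i).choose 2 + (r + i) ^ 2 + (i + 1).choose 2 =
        r.choose 2 + (r + i) * (2 * (r + i) - r) := by
      rw [show 2 * (r + i) - r = r + 2 * i by omega]
      apply Nat.cast_injective (R := ℚ)
      push_cast [Nat.cast_choose_two]
      ring
    rw [show ((r + i : ℕ) : ℤ) - r = i by push_cast; ring, thetaCoeff_natCast, ← pow_mul]
    calc _ = (-1) ^ r * ((-1) ^ i * (-1) ^ i) *
          q ^ ((r + i).choose 2 + (r + i) ^ 2 + (i + 1).choose 2) := by ring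
      _ = _ := by rw [e, neg_one_pow_mul_self]; ring
  · obtain ⟨j, rfl⟩ := Nat.exists_eq_add_of_lt h
    obtain ⟨d, rfl⟩ := Nat.exists_eq_add_of_le (by omega : j + 1 ≤ s)
    have e : (j + 1 + d).choose 2 + (j + 1 + d) ^ 2 + (j + 1).choose 2 =
        (j + 1 + d + j + 1).choose 2 + (j + 1 + d) * (2 * (j + 1 + d) - (j + 1 + d + j + 1)) := by
      rw [show 2 * (j + 1 + d) - (j + 1 + d + j + 1) = d by omega]
      apply Nat.cast_injective (R := ℚ)
      push_cast [Nat.cast_choose_two]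
      ring
    rw [show ((j + 1 + d : ℕ) : ℤ) - ((j + 1 + d + j + 1 : ℕ) : ℤ) = -(j : ℤ) - 1 by
        push_cast; ring,
      thetaCoeff_neg_sub_one, thetaCoeff_natCast, ← pow_mul]
    calc _ = (-1) ^ d * ((-1) ^ j * (-1) ^ j) *
          q ^ ((j + 1 + d).choose 2 + (j + 1 + d) ^ 2 + (j + 1).choose 2) := by ring
      _ = (-1) ^ d * ((-1) ^ (j + 1) * (-1) ^ (j + 1)) *
          q ^ ((j + 1 + d).choose 2 + (j + 1 + d) ^ 2 + (j + 1).choose 2) := by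
        rw [neg_one_pow_mul_self, neg_one_pow_mul_self]
      _ = _ := by rw [e]; ring

theorem hermiteMoment_qHermite_eq_sum (k : ℕ) : hermiteMoment q (qHermite q k) =
    ∑ r ∈ range (k + 1), qChoose q k r *
      if Even ((k : ℤ) - 2 * r) then thetaCoeff q (((k : ℤ) - 2 * r) / 2) else 0 := by
  simp only [qHermite, map_sum, map_smul, hermiteMoment_T, smul_eq_mul]

theorem neg_one_pow_mul_pow_mul_hermiteMoment_qHermite (s : ℕ) :
    (-1) ^ s * q ^ (s.choose 2 + s ^ 2) * hermiteMoment q (qHermite q (2 * s)) =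
      ∏ i ∈ range (2 * s), (q ^ s - q ^ i) := by
  rw [show ∏ i ∈ range (2 * s), (q ^ s - q ^ i) = ∏ i ∈ range (2 * s), (q ^ s + (-1) * q ^ i) by
    simp only [neg_one_mul, ← sub_eq_add_neg], prod_add_mul_pow_eq_sum_qChoose,
    hermiteMoment_qHermite_eq_sum, mul_sum]
  refine sum_congr rfl fun r hr => ?_
  have hr : r ≤ 2 * s := Nat.lt_succ_iff.1 (mem_range.1 hr)
  rw [if_pos ⟨(s : ℤ) - r, by push_cast; ring⟩,
    show ((2 * s : ℕ) - 2 * r : ℤ) / 2 = s - r by push_cast; omega]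
  linear_combination qChoose q (2 * s) r * neg_one_pow_mul_pow_mul_thetaCoeff_sub q s r hr

theorem hermiteMoment_qHermite [IsDomain R] (hq : q ≠ 0) (k : ℕ) :
    hermiteMoment q (qHermite q k) = if k = 0 then 1 else 0 := by
  obtain ⟨s, rfl | rfl⟩ := Nat.even_or_odd' k
  · rcases Nat.eq_zero_or_pos s with rfl | hs
    · simp [qHermite_zero, ← T_zero, hermiteMoment_T, thetaCoeff_zero]
    · have hprod := neg_one_pow_mul_pow_mul_hermiteMoment_qHermite q s
      rw [prod_eq_zero (mem_range.2 (by omega : s < 2 * s)) (sub_self _)] at hprod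
      rw [if_neg (by omega)]
      simpa [hq] using hprod
  · rw [hermiteMoment_qHermite_eq_sum, if_neg (by omega)]
    refine sum_eq_zero fun r _ => ?_
    rw [if_neg, mul_zero]
    rintro ⟨a, ha⟩
    push_cast at ha
    omega

theorem hermiteMoment_pow (m : ℕ) : hermiteMoment q ((T 1 + T (-1)) ^ (2 * m)) =
    ∑ i ∈ range (m + 1), (((2 * m).choose (m - i) : R) -
      if i < m then ((2 * m).choose (m - i - 1) : R) else 0) * thetaCoeff q i := by
  have hbinom : (T 1 + T (-1) : R[T;T⁻¹]) ^ (2 * m) =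
      ∑ j ∈ range (2 * m + 1), ((2 * m).choose j : R) • T (2 * (j : ℤ) - 2 * m) := by
    rw [add_pow]
    refine sum_congr rfl fun j hj => ?_
    rw [T_pow, T_pow, ← T_add, mul_comm, ← nsmul_eq_mul, ← Nat.cast_smul_eq_nsmul R]
    congr 2
    push_cast [Nat.cast_sub (Nat.lt_succ_iff.1 (mem_range.1 hj))]
    ring
  have hmoment : hermiteMoment q ((T 1 + T (-1)) ^ (2 * m)) =
      ∑ j ∈ range (2 * m + 1), ((2 * m).choose j : R) * thetaCoeff q ((j : ℤ) - m) := by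
    simp only [hbinom, map_sum, map_smul, hermiteMoment_T, smul_eq_mul]
    refine sum_congr rfl fun j _ => ?_
    rw [if_pos ⟨(j : ℤ) - m, by ring⟩, show (2 * (j : ℤ) - 2 * m) / 2 = j - m by omega]
  have hlow : ∀ i ∈ range m,
      ((2 * m).choose (m - 1 - i) : R) * thetaCoeff q ((m - 1 - i : ℕ) - m : ℤ) =
      -(((2 * m).choose (m - i - 1) : R) * thetaCoeff q i) := by
    intro i hi
    rw [show ((m - 1 - i : ℕ) - m : ℤ) = -(i : ℤ) - 1 by have := mem_range.1 hi; omega,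
      thetaCoeff_neg_sub_one, show m - 1 - i = m - i - 1 by omega, mul_neg]
  have hhigh : ∀ i ∈ range (m + 1),
      ((2 * m).choose (m + i) : R) * thetaCoeff q ((m + i : ℕ) - m : ℤ) =
      ((2 * m).choose (m - i) : R) * thetaCoeff q i := by
    intro i hi
    rw [show ((m + i : ℕ) - m : ℤ) = i by push_cast; ring,
      Nat.choose_symm_of_eq_add (show 2 * m = (m + i) + (m - i) by have := mem_range.1 hi; omega)]
  rw [hmoment, show 2 * m + 1 = m + (m + 1) by ring, sum_range_add, ← sum_range_reflect,
    sum_congr rfl hlow, sum_congr rfl hhigh, sum_neg_distrib]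
  rw [neg_add_eq_sub]
  simp only [sub_mul, sum_sub_distrib]
  congr 1
  rw [sum_range_succ, if_neg (lt_irrefl m), zero_mul, add_zero]
  exact sum_congr rfl fun i hi => by rw [if_pos (mem_range.1 hi)]

theorem pathWeight_one_sub_pow [IsDomain R] (hq : q ≠ 0) (m : ℕ) :
    pathWeight (fun k => 1 - q ^ k) (2 * m) 0 =
      ∑ i ∈ range (m + 1), (((2 * m).choose (m - i) : R) -
        if i < m then ((2 * m).choose (m - i - 1) : R) else 0) * thetaCoeff q i := by
  rw [pathWeight_eq_moment (fun k => 1 - q ^ k) (hermiteMoment q) (T 1 + T (-1)) (qHermite q)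
    (mul_qHermite_zero q) (mul_qHermite_succ q) (hermiteMoment_qHermite q hq), qHermite_zero,
    mul_one, hermiteMoment_pow]

end Hermite

section Matchings

def IsPerfectMatchingOn (V : Finset ℕ) (M : Finset (ℕ × ℕ)) : Prop :=
  (∀ p ∈ M, p.1 < p.2 ∧ p.1 ∈ V ∧ p.2 ∈ V) ∧ ∀ x ∈ V, ∃! p, p ∈ M ∧ (x = p.1 ∨ x = p.2)

namespace IsPerfectMatchingOn

variable {V : Finset ℕ} {M : Finset (ℕ × ℕ)}

theorem eq_of_mem (hM : IsPerfectMatchingOn V M) {p p' : ℕ × ℕ} {x : ℕ} (hp : p ∈ M)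
    (hp' : p' ∈ M) (hx : x = p.1 ∨ x = p.2) (hx' : x = p'.1 ∨ x = p'.2) : p = p' := by
  have hxV : x ∈ V := by rcases hx with rfl | rfl <;> simp [hM.1 p hp]
  exact (hM.2 x hxV).unique ⟨hp, hx⟩ ⟨hp', hx'⟩

theorem of_insert_pair {a b : ℕ} (h : IsPerfectMatchingOn V (insert (a, b) M)) (habM : (a, b) ∉ M) :
    IsPerfectMatchingOn ((V.erase a).erase b) M := by
  have havoid : ∀ p ∈ M, p.1 ≠ a ∧ p.1 ≠ b ∧ p.2 ≠ a ∧ p.2 ≠ b := by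
    intro p hp
    have hne : ∀ x, (x = p.1 ∨ x = p.2) → (x = a ∨ x = b) → False := fun x hxp hxab =>
      habM (h.eq_of_mem (mem_insert_of_mem hp) (mem_insert_self _ _) hxp hxab ▸ hp)
    exact ⟨fun e => hne _ (.inl rfl) (.inl e), fun e => hne _ (.inl rfl) (.inr e),
      fun e => hne _ (.inr rfl) (.inl e), fun e => hne _ (.inr rfl) (.inr e)⟩
  refine ⟨fun p hp => ?_, fun x hx => ?_⟩
  · obtain ⟨h1, h2, h3⟩ := h.1 p (mem_insert_of_mem hp)
    obtain ⟨n1, n2, n3, n4⟩ := havoid p hp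
    simp [h1, h2, h3, n1, n2, n3, n4]
  · simp only [mem_erase] at hx
    obtain ⟨p, ⟨hp, hxp⟩, huniq⟩ := h.2 x hx.2.2
    have hpM : p ∈ M := by
      rcases mem_insert.1 hp with rfl | hp
      · rcases hxp with e | e <;> simp_all
      · exact hp
    exact ⟨p, ⟨hpM, hxp⟩, fun p' hp' => huniq p' ⟨mem_insert_of_mem hp'.1, hp'.2⟩⟩

theorem insert_pair {a b : ℕ} (h : IsPerfectMatchingOn ((V.erase a).erase b) M) (hab : a < b)
    (ha : a ∈ V) (hb : b ∈ V) : IsPerfectMatchingOn V (insert (a, b) M) := by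
  have havoid : ∀ p ∈ M, ∀ x, (x = p.1 ∨ x = p.2) → x ≠ a ∧ x ≠ b := by
    intro p hp x hx
    have := h.1 p hp
    rcases hx with rfl | rfl <;> simp_all
  refine ⟨fun p hp => ?_, fun x hx => ?_⟩
  · rcases mem_insert.1 hp with rfl | hp
    · exact ⟨hab, ha, hb⟩
    · obtain ⟨h1, h2, h3⟩ := h.1 p hp
      exact ⟨h1, mem_of_mem_erase (mem_of_mem_erase h2), mem_of_mem_erase (mem_of_mem_erase h3)⟩
  · by_cases hxab : x = a ∨ x = b
    · refine ⟨(a, b), ⟨mem_insert_self _ _, hxab⟩, fun p ⟨hp, hxp⟩ => ?_⟩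
      rcases mem_insert.1 hp with rfl | hp
      · rfl
      · have := havoid p hp x hxp
        tauto
    · obtain ⟨hxa, hxb⟩ := not_or.1 hxab
      obtain ⟨p, ⟨hp, hxp⟩, huniq⟩ := h.2 x (by simp [hx, hxa, hxb])
      refine ⟨p, ⟨mem_insert_of_mem hp, hxp⟩, fun p' ⟨hp', hxp'⟩ => ?_⟩
      rcases mem_insert.1 hp' with rfl | hp'
      · tauto
      · exact huniq p' ⟨hp', hxp'⟩

theorem insert_iff {a b : ℕ} (hab : a < b) (ha : a ∈ V) (hb : b ∈ V) (habM : (a, b) ∉ M) :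
    IsPerfectMatchingOn V (insert (a, b) M) ↔ IsPerfectMatchingOn ((V.erase a).erase b) M :=
  ⟨fun h => h.of_insert_pair habM, fun h => h.insert_pair hab ha hb⟩

end IsPerfectMatchingOn

/-- `M` finishes a left-to-right scan that has the points of `B` still to visit: the points of `S`
are left ends of chords opened earlier, so every block ends in `B`. -/
def IsCompletion (S B : Finset ℕ) (M : Finset (ℕ × ℕ)) : Prop :=
  IsPerfectMatchingOn (S ∪ B) M ∧ ∀ p ∈ M, p.2 ∈ B

noncomputable def completions (S B : Finset ℕ) : Finset (Finset (ℕ × ℕ)) :=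
  ((S ∪ B) ×ˢ B).powerset.filter (IsCompletion S B)

theorem mem_completions {S B : Finset ℕ} {M : Finset (ℕ × ℕ)} :
    M ∈ completions S B ↔ IsCompletion S B M := by
  refine ⟨fun h => (mem_filter.1 h).2, fun h => mem_filter.2 ⟨mem_powerset.2 fun p hp => ?_, h⟩⟩
  exact mem_product.2 ⟨(h.1.1 p hp).2.1, h.2 p hp⟩

theorem completions_empty_right (S : Finset ℕ) :
    completions S ∅ = if S = ∅ then {∅} else ∅ := by
  ext M
  rw [mem_completions]
  split_ifs with hS
  · subst hS
    simp only [mem_singleton]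
    refine ⟨fun h => eq_empty_of_forall_notMem fun p hp => by simpa using h.2 p hp, ?_⟩
    rintro rfl
    simp [IsCompletion, IsPerfectMatchingOn]
  · simp only [notMem_empty, iff_false]
    rintro ⟨hM, hB⟩
    obtain ⟨s, hs⟩ := nonempty_iff_ne_empty.2 hS
    obtain ⟨p, ⟨hp, -⟩, -⟩ := hM.2 s (mem_union_left _ hs)
    simpa using hB p hp

theorem crossNum_insert {p : ℕ × ℕ} {M : Finset (ℕ × ℕ)} (hp : p ∉ M) :
    crossNum (insert p M) = crossNum M
      + #(M.filter fun r => p.1 < r.1 ∧ r.1 < p.2 ∧ p.2 < r.2)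
      + #(M.filter fun r => r.1 < p.1 ∧ p.1 < r.2 ∧ r.2 < p.2) := by
  simp only [crossNum, card_filter, sum_product, sum_insert hp, lt_irrefl, and_false,
    if_false, zero_add, sum_add_distrib]
  ring

noncomputable def completionSum {R : Type*} [CommSemiring R] (q : R) (S B : Finset ℕ) : R :=
  ∑ M ∈ completions S B, q ^ crossNum M

section Step

variable {S B : Finset ℕ} {t : ℕ}

theorem completions_filter_exists_fst_eq (hB : ∀ b ∈ B, t < b) :
    (completions S (insert t B)).filter (fun M => ∃ p ∈ M, p.1 = t) =
      completions (insert t S) B := by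
  have hV : S ∪ insert t B = insert t S ∪ B := by
    ext x; simp only [mem_union, mem_insert]; tauto
  ext M
  simp only [mem_filter, mem_completions, IsCompletion, hV]
  constructor
  · rintro ⟨⟨hM, hsnd⟩, p₀, hp₀, hp₀t⟩
    refine ⟨hM, fun p hp => (mem_insert.1 (hsnd p hp)).resolve_left fun hpt => ?_⟩
    have := hM.eq_of_mem hp hp₀ (.inr hpt.symm) (.inl hp₀t.symm)
    have := (hM.1 p hp).1
    simp_all
  · rintro ⟨hM, hsnd⟩
    refine ⟨⟨hM, fun p hp => mem_insert_of_mem (hsnd p hp)⟩, ?_⟩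
    obtain ⟨p, ⟨hp, htp⟩, -⟩ := hM.2 t (by simp)
    refine ⟨p, hp, (htp.resolve_right fun h => ?_).symm⟩
    exact lt_irrefl t (h ▸ hB p.2 (hsnd p hp))

theorem isCompletion_insert_iff (hS : ∀ s ∈ S, s < t) (hB : ∀ b ∈ B, t < b) {a : ℕ} (ha : a ∈ S)
    {M : Finset (ℕ × ℕ)} (haM : (a, t) ∉ M) :
    IsCompletion S (insert t B) (insert (a, t) M) ↔ IsCompletion (S.erase a) B M := by
  have hat := hS a ha
  have hV : ((S ∪ insert t B).erase a).erase t = S.erase a ∪ B := by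
    ext x
    simp only [mem_erase, mem_union, mem_insert]
    constructor
    · rintro ⟨hxt, hxa, hx | hx | hx⟩
      exacts [.inl ⟨hxa, hx⟩, absurd hx hxt, .inr hx]
    · rintro (⟨hxa, hx⟩ | hx)
      · exact ⟨(hS x hx).ne, hxa, .inl hx⟩
      · exact ⟨(hB x hx).ne', fun h => lt_asymm hat (h ▸ hB x hx), .inr (.inr hx)⟩
  unfold IsCompletion
  rw [IsPerfectMatchingOn.insert_iff hat (by simp [ha]) (by simp) haM, hV]
  refine and_congr_right fun hM => ⟨fun h p hp => ?_, fun h p hp => ?_⟩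
  · refine (mem_insert.1 (h p (mem_insert_of_mem hp))).resolve_left fun hpt => ?_
    have := (hM.1 p hp).2.2
    simp only [mem_union, mem_erase] at this
    rcases this with ⟨-, h'⟩ | h'
    · exact lt_irrefl t (hpt ▸ hS _ h')
    · exact lt_irrefl t (hpt ▸ hB _ h')
  · rcases mem_insert.1 hp with rfl | hp
    · exact mem_insert_self _ _
    · exact mem_insert_of_mem (h p hp)

theorem pair_notMem_of_isCompletion (hB : ∀ b ∈ B, t < b) {S' : Finset ℕ} {M : Finset (ℕ × ℕ)}
    (hM : IsCompletion S' B M) (a : ℕ) : (a, t) ∉ M :=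
  fun h => lt_irrefl t (hB t (hM.2 _ h))

theorem completions_filter_not_exists_fst_eq (hS : ∀ s ∈ S, s < t) (hB : ∀ b ∈ B, t < b) :
    (completions S (insert t B)).filter (fun M => ¬∃ p ∈ M, p.1 = t) =
      S.biUnion fun a => (completions (S.erase a) B).image (insert (a, t)) := by
  ext M
  simp only [mem_filter, mem_biUnion, mem_image, mem_completions]
  constructor
  · rintro ⟨hM, hno⟩
    obtain ⟨p, ⟨hp, htp⟩, -⟩ := hM.1.2 t (by simp)
    have hpt : (p.1, t) = p := Prod.ext rfl (htp.resolve_left fun h => hno ⟨p, hp, h.symm⟩)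
    rw [← hpt] at hp
    have ha : p.1 ∈ S := by
      have hlt := (hM.1.1 _ hp).1
      rcases mem_union.1 (hM.1.1 _ hp).2.1 with h | h
      · exact h
      · rcases mem_insert.1 h with h | h
        · exact absurd h hlt.ne
        · exact absurd (hB _ h) (lt_asymm hlt)
    refine ⟨p.1, ha, M.erase (p.1, t), ?_, insert_erase hp⟩
    rw [← isCompletion_insert_iff hS hB ha (notMem_erase _ _), insert_erase hp]
    exact hM
  · rintro ⟨a, ha, M', hM', rfl⟩
    refine ⟨(isCompletion_insert_iff hS hB ha (pair_notMem_of_isCompletion hB hM' a)).2 hM', ?_⟩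
    rintro ⟨p, hp, hpt⟩
    rcases mem_insert.1 hp with rfl | hp
    · exact (hS _ ha).ne hpt
    · rcases mem_union.1 (hM'.1.1 p hp).2.1 with h | h
      · exact (hS _ (mem_of_mem_erase h)).ne hpt
      · exact (hB _ h).ne' hpt

theorem pairwiseDisjoint_image_insert (hS : ∀ s ∈ S, s < t) (hB : ∀ b ∈ B, t < b) :
    (S : Set ℕ).PairwiseDisjoint fun a => (completions (S.erase a) B).image (insert (a, t)) := by
  intro a ha a' ha' hne
  simp only [Function.onFun, disjoint_left, mem_image, mem_completions]
  rintro M ⟨M₁, hM₁, rfl⟩ ⟨M₂, -, hM⟩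
  have hcomp := (isCompletion_insert_iff hS hB ha (pair_notMem_of_isCompletion hB hM₁ a)).2 hM₁
  have hmem : (a', t) ∈ insert (a, t) M₁ := hM ▸ mem_insert_self _ _
  have := hcomp.1.eq_of_mem (mem_insert_self _ _) hmem (.inr rfl) (.inr rfl)
  exact hne (congrArg Prod.fst this)

theorem injOn_insert_completions (hB : ∀ b ∈ B, t < b) (a : ℕ) :
    Set.InjOn (insert (a, t)) (completions (S.erase a) B : Set (Finset (ℕ × ℕ))) := by
  intro M₁ h₁ M₂ h₂ e
  rw [← erase_insert (pair_notMem_of_isCompletion hB (mem_completions.1 h₁) a), e,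
    erase_insert (pair_notMem_of_isCompletion hB (mem_completions.1 h₂) a)]

theorem crossNum_insert_pair (hS : ∀ s ∈ S, s < t) (hB : ∀ b ∈ B, t < b) {a : ℕ}
    {M : Finset (ℕ × ℕ)} (hM : IsCompletion (S.erase a) B M) :
    crossNum (insert (a, t) M) = crossNum M + #(S.filter (a < ·)) := by
  have hfst : ∀ r ∈ M, r.1 < t → r.1 ∈ S := fun r hr hrt => by
    rcases mem_union.1 (hM.1.1 r hr).2.1 with h | h
    · exact mem_of_mem_erase h
    · exact absurd (hB _ h) (lt_asymm hrt)
  rw [crossNum_insert (pair_notMem_of_isCompletion hB hM a)]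
  have hnone : (M.filter fun r => r.1 < a ∧ a < r.2 ∧ r.2 < t) = ∅ :=
    filter_eq_empty_iff.2 fun r hr h => lt_asymm h.2.2 (hB _ (hM.2 r hr))
  rw [hnone, card_empty, add_zero]
  congr 1
  refine card_nbij Prod.fst (fun r hr => ?_) (fun r hr r' hr' e => ?_) (fun c hc => ?_)
  · simp only [coe_filter, Set.mem_ofPred_eq] at hr ⊢
    exact ⟨hfst r hr.1 hr.2.2.1, hr.2.1⟩
  · simp only [coe_filter, Set.mem_ofPred_eq] at hr hr'
    exact hM.1.eq_of_mem hr.1 hr'.1 (.inl rfl) (.inl e)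
  · simp only [coe_filter, Set.mem_ofPred_eq] at hc
    obtain ⟨hcS, hac⟩ := hc
    obtain ⟨r, ⟨hr, hcr⟩, -⟩ := hM.1.2 c (mem_union_left _ (mem_erase.2 ⟨hac.ne', hcS⟩))
    have hrB := hB _ (hM.2 r hr)
    obtain rfl : c = r.1 := hcr.resolve_right fun h => lt_asymm (hS c hcS) (h ▸ hrB)
    exact ⟨r, by simpa using ⟨hr, hac, hS _ hcS, hrB⟩, rfl⟩

theorem completionSum_insert {R : Type*} [CommSemiring R] (q : R) (hS : ∀ s ∈ S, s < t)
    (hB : ∀ b ∈ B, t < b) :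
    completionSum q S (insert t B) = completionSum q (insert t S) B +
      ∑ a ∈ S, q ^ #(S.filter (a < ·)) * completionSum q (S.erase a) B := by
  rw [completionSum, ← sum_filter_add_sum_filter_not _ (fun M => ∃ p ∈ M, p.1 = t),
    completions_filter_exists_fst_eq hB, completions_filter_not_exists_fst_eq hS hB,
    sum_biUnion (pairwiseDisjoint_image_insert hS hB), completionSum]
  congr 1
  refine sum_congr rfl fun a _ => ?_
  rw [sum_image (injOn_insert_completions hB a), completionSum, mul_sum]
  refine sum_congr rfl fun M hM => ?_
  rw [crossNum_insert_pair hS hB (mem_completions.1 hM), pow_add, mul_comm]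

end Step

theorem sum_pow_card_filter_lt {α R : Type*} [LinearOrder α] [CommSemiring R] (q : R)
    (S : Finset α) :
    ∑ a ∈ S, q ^ #(S.filter (a < ·)) = ∑ j ∈ range #S, q ^ j := by
  induction S using Finset.induction_on_max with
  | empty => simp
  | insert b S hb ih =>
    have hbS : b ∉ S := fun h => lt_irrefl b (hb b h)
    have hfilter : ∀ a ∈ S, (insert b S).filter (a < ·) = insert b (S.filter (a < ·)) :=
      fun a ha => by rw [filter_insert, if_pos (hb a ha)]
    rw [sum_insert hbS, card_insert_of_notMem hbS, sum_range_succ',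
      filter_eq_empty_iff.2 fun x hx => not_lt.2 ?_, card_empty, pow_zero,
      sum_congr rfl fun a ha => by
        rw [hfilter a ha, card_insert_of_notMem (by simp [hbS]), pow_succ],
      ← sum_mul, ih, sum_mul, add_comm]
    · simp only [pow_succ]
    · rcases mem_insert.1 hx with rfl | hx
      exacts [le_rfl, (hb x hx).le]

theorem completionSum_eq_pathWeight {R : Type*} [CommSemiring R] (q : R) (S B : Finset ℕ)
    (hSB : ∀ s ∈ S, ∀ b ∈ B, s < b) :
    completionSum q S B = pathWeight (fun k => ∑ j ∈ range k, q ^ j) #B #S := by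
  induction B using Finset.induction_on_min generalizing S with
  | empty =>
    rw [completionSum, completions_empty_right]
    split_ifs with h
    · simp [h, pathWeight, crossNum]
    · simp [pathWeight, h]
  | insert t B ht ih =>
    have htB : t ∉ B := fun h => lt_irrefl t (ht t h)
    have hS : ∀ s ∈ S, s < t := fun s hs => hSB s hs t (mem_insert_self _ _)
    have hopen : completionSum q (insert t S) B =
        pathWeight (fun k => ∑ j ∈ range k, q ^ j) #B (#S + 1) := by
      rw [ih _ fun s hs b hb => ?_, card_insert_of_notMem fun h => lt_irrefl t (hS t h)]
      rcases mem_insert.1 hs with rfl | hs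
      exacts [ht b hb, hSB s hs b (mem_insert_of_mem hb)]
    have hclose : ∀ a ∈ S, completionSum q (S.erase a) B =
        pathWeight (fun k => ∑ j ∈ range k, q ^ j) #B (#S - 1) := fun a ha => by
      rw [ih _ fun s hs b hb => hSB s (mem_of_mem_erase hs) b (mem_insert_of_mem hb),
        card_erase_of_mem ha]
    rw [completionSum_insert q hS ht, hopen, sum_congr rfl fun a ha => by rw [hclose a ha],
      ← sum_mul, sum_pow_card_filter_lt, card_insert_of_notMem htB]
    cases h : #S <;> simp [pathWeight]

end Matchings

theorem touchardPoly_eq_pathWeight (m : ℕ) :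
    touchardPoly m = pathWeight (fun k => ∑ j ∈ range k, Polynomial.X ^ j) (2 * m) 0 := by
  rw [← card_range (2 * m), ← card_empty (α := ℕ),
    ← completionSum_eq_pathWeight _ _ _ (by simp)]
  refine sum_congr (ext fun M => ?_) fun _ _ => rfl
  simp only [mem_filter, mem_powerset, mem_completions, IsCompletion, IsPerfectMatchingOn,
    empty_union, mem_range]
  constructor
  · rintro ⟨hsub, hlt, hcov⟩
    have hmem : ∀ p ∈ M, p.1 ∈ range (2 * m) ∧ p.2 ∈ range (2 * m) := fun p hp =>
      mem_product.1 (hsub hp)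
    exact ⟨⟨fun p hp => ⟨hlt p hp, mem_range.1 (hmem p hp).1, mem_range.1 (hmem p hp).2⟩, hcov⟩,
      fun p hp => mem_range.1 (hmem p hp).2⟩
  · rintro ⟨⟨hblk, hcov⟩, -⟩
    exact ⟨fun p hp => mem_product.2 ⟨mem_range.2 (hblk p hp).2.1, mem_range.2 (hblk p hp).2.2⟩,
      fun p hp => (hblk p hp).1, hcov⟩

/-- The Touchard–Riordan formula:
`T_m(q)(1−q)^m = Σ_{i=0}^m (−1)^i [C(2m, m−i) − C(2m, m−i−1)] q^{C(i+1,2)}`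
(with `C(2m, m−i−1)` read as `0` for `i = m`). -/
theorem touchard_riordan (m : ℕ) :
    touchardPoly m * (1 - Polynomial.X) ^ m =
      ∑ i ∈ Finset.range (m + 1),
        Polynomial.C ((-1 : ℤ) ^ i *
            ((Nat.choose (2 * m) (m - i) : ℤ) -
              if i < m then (Nat.choose (2 * m) (m - i - 1) : ℤ) else 0)) *
          Polynomial.X ^ Nat.choose (i + 1) 2 := by
  have hweight :
      (fun k => (∑ j ∈ range k, (Polynomial.X : Polynomial ℤ) ^ j) * (1 - Polynomial.X)) =
      fun k => 1 - Polynomial.X ^ k := funext fun k => geom_sum_mul_neg _ k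
  have hscale := pathWeight_mul_const (fun k => ∑ j ∈ range k, (Polynomial.X : Polynomial ℤ) ^ j)
    (1 - Polynomial.X) (2 * m) 0
  rw [hweight, show (2 * m + 0) / 2 = m by omega,
    pathWeight_one_sub_pow Polynomial.X Polynomial.X_ne_zero] at hscale
  rw [touchardPoly_eq_pathWeight, ← hscale]
  refine sum_congr rfl fun i _ => ?_
  rw [thetaCoeff_natCast]
  split_ifs <;>
    simp only [map_mul, map_sub, map_pow, map_neg, map_one, map_natCast, map_zero] <;> ring
end
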